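/- arXiv:0810.5600 — 5 statements merged into one kernel-verified Lean document; each statement's English description precedes it below -/
import Mathlib

section
/- Let X be a real Banach space with norm ‖·‖_X and suppose there is a separating polynomial p of degree n on X. Then there is a polynomial q on X such that ‖y‖_X^{2n} ≤ q(y) for all y ∈ X with q(y) < 1; furthermore, there is a constant K₁ > 0 such that q(y) ≤ K₁ · max{‖y‖_X, ‖y‖_X^{2n}} for all y ∈ X. -/
/-- A (continuous) polynomial on a real Banach space `X`. -/
def IsPolynomialFun {X : Type*} [NormedAddCommGroup X] [NormedSpace ℝ X] (f : X → ℝ) : Prop :=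
  ∃ (n : ℕ) (P : (i : ℕ) → ContinuousMultilinearMap ℝ (fun _ : Fin i => X) ℝ),
    ∀ x, f x = ∑ i ∈ Finset.range (n + 1), P i (fun _ => x)

section Aux

variable {X : Type*} [NormedAddCommGroup X] [NormedSpace ℝ X]

/-- The product of two scalar-valued continuous multilinear maps, as a continuous
multilinear map in the concatenated variables. -/
noncomputable def mulCMM {a b : ℕ} (f : ContinuousMultilinearMap ℝ (fun _ : Fin a => X) ℝ)
    (g : ContinuousMultilinearMap ℝ (fun _ : Fin b => X) ℝ) :
    ContinuousMultilinearMap ℝ (fun _ : Fin (a + b) => X) ℝ :=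
  MultilinearMap.mkContinuous
    (MultilinearMap.domDomCongr finSumFinEquiv
      ((TensorProduct.lid ℝ ℝ).toLinearMap.compMultilinearMap
        (f.toMultilinearMap.domCoprod g.toMultilinearMap)))
    (‖f‖ * ‖g‖) (by
      intro m
      have h1 : (MultilinearMap.domDomCongr finSumFinEquiv
          ((TensorProduct.lid ℝ ℝ).toLinearMap.compMultilinearMap
            (f.toMultilinearMap.domCoprod g.toMultilinearMap))) m
          = f (fun i => m (finSumFinEquiv (Sum.inl i))) *
            g (fun j => m (finSumFinEquiv (Sum.inr j))) := by
        simp [MultilinearMap.domDomCongr, MultilinearMap.domCoprod,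
          TensorProduct.lid_tmul, smul_eq_mul]
      rw [h1]
      have hf := f.le_opNorm (fun i => m (finSumFinEquiv (Sum.inl i)))
      have hg := g.le_opNorm (fun j => m (finSumFinEquiv (Sum.inr j)))
      have hprod : ∏ i : Fin (a + b), ‖m i‖
          = (∏ i : Fin a, ‖m (finSumFinEquiv (Sum.inl i))‖) *
            (∏ j : Fin b, ‖m (finSumFinEquiv (Sum.inr j))‖) := by
        rw [Fin.prod_univ_add (f := fun i => ‖m i‖)]
        simp [finSumFinEquiv]
      calc ‖f (fun i => m (finSumFinEquiv (Sum.inl i))) *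
            g (fun j => m (finSumFinEquiv (Sum.inr j)))‖
          = ‖f (fun i => m (finSumFinEquiv (Sum.inl i)))‖ *
            ‖g (fun j => m (finSumFinEquiv (Sum.inr j)))‖ := norm_mul _ _
        _ ≤ (‖f‖ * ∏ i : Fin a, ‖m (finSumFinEquiv (Sum.inl i))‖) *
            (‖g‖ * ∏ j : Fin b, ‖m (finSumFinEquiv (Sum.inr j))‖) := by
            apply mul_le_mul hf hg (norm_nonneg _)
            positivity
        _ = ‖f‖ * ‖g‖ * ∏ i : Fin (a + b), ‖m i‖ := by rw [hprod]; ring)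

theorem mulCMM_apply_const {a b : ℕ} (f : ContinuousMultilinearMap ℝ (fun _ : Fin a => X) ℝ)
    (g : ContinuousMultilinearMap ℝ (fun _ : Fin b => X) ℝ) (y : X) :
    mulCMM f g (fun _ => y) = f (fun _ => y) * g (fun _ => y) := by
  show (MultilinearMap.domDomCongr finSumFinEquiv
      ((TensorProduct.lid ℝ ℝ).toLinearMap.compMultilinearMap
        (f.toMultilinearMap.domCoprod g.toMultilinearMap))) (fun _ => y) = _
  simp [MultilinearMap.domDomCongr, MultilinearMap.domCoprod,
    TensorProduct.lid_tmul, smul_eq_mul]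

/-- A single continuous multilinear map evaluated on the diagonal is a polynomial function. -/
theorem isPolynomialFun_single {d : ℕ} (Q : ContinuousMultilinearMap ℝ (fun _ : Fin d => X) ℝ) :
    IsPolynomialFun (fun y : X => Q (fun _ => y)) := by
  refine ⟨d, Function.update (fun j => (0 : ContinuousMultilinearMap ℝ (fun _ : Fin j => X) ℝ))
    d Q, fun x => ?_⟩
  rw [Finset.sum_eq_single_of_mem d (Finset.self_mem_range_succ d)]
  · rw [Function.update_self]
  · intro j _ hj
    rw [Function.update_of_ne hj]
    rfl

theorem isPolynomialFun_add {f g : X → ℝ} (hf : IsPolynomialFun f) (hg : IsPolynomialFun g) :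
    IsPolynomialFun (f + g) := by
  obtain ⟨a, F, hF⟩ := hf
  obtain ⟨b, G, hG⟩ := hg
  set F' : (j : ℕ) → ContinuousMultilinearMap ℝ (fun _ : Fin j => X) ℝ :=
    fun j => if j ≤ a then F j else 0 with hF'
  set G' : (j : ℕ) → ContinuousMultilinearMap ℝ (fun _ : Fin j => X) ℝ :=
    fun j => if j ≤ b then G j else 0 with hG'
  refine ⟨max a b, fun j => F' j + G' j, fun x => ?_⟩
  have key : ∀ (c : ℕ) (H : (j : ℕ) → ContinuousMultilinearMap ℝ (fun _ : Fin j => X) ℝ),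
      c ≤ max a b →
      ∑ j ∈ Finset.range (max a b + 1), (if j ≤ c then H j else 0) (fun _ => x)
        = ∑ j ∈ Finset.range (c + 1), H j (fun _ => x) := by
    intro c H hc
    rw [← Finset.sum_subset (Finset.range_subset_range.2 (by omega : c + 1 ≤ max a b + 1))]
    · refine Finset.sum_congr rfl fun j hj => ?_
      rw [if_pos (by simpa [Nat.lt_succ_iff] using Finset.mem_range.1 hj)]
    · intro j _ hj
      rw [if_neg (by simp only [Finset.mem_range] at hj; omega)]
      rfl
  simp only [ContinuousMultilinearMap.add_apply, Finset.sum_add_distrib]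
  rw [hF', hG']
  rw [key a F (le_max_left a b), key b G (le_max_right a b), Pi.add_apply, hF x, hG x]

theorem isPolynomialFun_sum {ι : Type*} (s : Finset ι) (f : ι → X → ℝ)
    (hf : ∀ i ∈ s, IsPolynomialFun (f i)) :
    IsPolynomialFun (fun y => ∑ i ∈ s, f i y) := by
  classical
  induction s using Finset.induction_on with
  | empty =>
      simp only [Finset.sum_empty]
      exact ⟨0, fun _ => 0, fun x => by simp⟩
  | insert a s hx ih =>
      simp only [Finset.sum_insert hx]
      exact isPolynomialFun_add (hf a (Finset.mem_insert_self a s))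
        (ih fun i hi => hf i (Finset.mem_insert_of_mem hi))

end Aux
/-- If `X` admits a separating polynomial `p` of degree `n`, then there is a polynomial `q`
with `‖y‖^{2n} ≤ q y` whenever `q y < 1`, and a constant `K₁ > 0` with
`q y ≤ K₁ · max {‖y‖, ‖y‖^{2n}}` for all `y`. -/
theorem exists_good_polynomial
    {X : Type*} [NormedAddCommGroup X] [NormedSpace ℝ X]
    (n : ℕ) (p : X → ℝ)
    (P : (i : ℕ) → ContinuousMultilinearMap ℝ (fun _ : Fin i => X) ℝ)
    (hp : ∀ x, p x = ∑ i ∈ Finset.range (n + 1), P i (fun _ => x))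
    (hp0 : p 0 = 0)
    (hpsep : ∃ η > (0 : ℝ), ∀ x : X, ‖x‖ = 1 → η ≤ |p x|) :
    ∃ q : X → ℝ, IsPolynomialFun q ∧
      (∀ y : X, q y < 1 → ‖y‖ ^ (2 * n) ≤ q y) ∧
      ∃ K₁ > (0 : ℝ), ∀ y : X, q y ≤ K₁ * max ‖y‖ (‖y‖ ^ (2 * n)) := by
  classical
  obtain ⟨η, hη, hsep⟩ := hpsep
  -- the homogeneous pieces vanish at `0`, and the constant term of `p` vanishes
  have hPzero : ∀ i, 1 ≤ i → P i (fun _ => (0 : X)) = 0 := by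
    intro i hi
    have : Nonempty (Fin i) := ⟨⟨0, hi⟩⟩
    have h0 : (fun _ : Fin i => (0 : X)) = (0 : (Fin i) → X) := rfl
    rw [h0]
    exact (P i).map_zero
  have hP0 : ∀ y : X, P 0 (fun _ => y) = 0 := by
    intro y
    have h0 : (fun _ : Fin 0 => y) = (fun _ : Fin 0 => (0 : X)) :=
      funext fun i => i.elim0
    rw [h0]
    have h := hp 0
    rw [hp0] at h
    rw [Finset.sum_eq_single_of_mem 0 (Finset.mem_range.2 (Nat.succ_pos n))
      (fun i _ hi => hPzero i (Nat.one_le_iff_ne_zero.2 hi))] at h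
    exact h.symm
  by_cases hX : ∃ x : X, ‖x‖ = 1
  · -- nontrivial case
    obtain ⟨x₀, hx₀⟩ := hX
    have hn : 1 ≤ n := by
      by_contra hcon
      obtain rfl : n = 0 := by omega
      have h := hsep x₀ hx₀
      rw [hp x₀, Finset.range_one, Finset.sum_singleton, hP0 x₀, abs_zero] at h
      linarith
    set c : ℝ := (n + 1) / η ^ 2 with hc
    have hcpos : 0 < c := by positivity
    -- shared auxiliary facts
    have hqval : ∀ y : X, (∑ i ∈ Finset.range (n + 1),
        (c • mulCMM (P i) (P i)) (fun _ => y))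
        = c * ∑ i ∈ Finset.range (n + 1), (P i (fun _ => y)) ^ 2 := by
      intro y
      rw [Finset.mul_sum]
      refine Finset.sum_congr rfl fun i _ => ?_
      rw [ContinuousMultilinearMap.smul_apply, mulCMM_apply_const, smul_eq_mul, sq]
    have hscale : ∀ (y : X), y ≠ 0 →
        ∀ i, P i (fun _ => y) = ‖y‖ ^ i * P i (fun _ => ‖y‖⁻¹ • y) := by
      intro y hy i
      have hnorm : ‖y‖ ≠ 0 := norm_ne_zero_iff.2 hy
      have h : (fun _ : Fin i => y) = fun _ : Fin i => ‖y‖ • (‖y‖⁻¹ • y) := by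
        funext j
        rw [smul_smul, mul_inv_cancel₀ hnorm, one_smul]
      rw [h, (P i).map_smul_univ (fun _ => ‖y‖) (fun _ => ‖y‖⁻¹ • y)]
      simp [smul_eq_mul]
    have hxunit : ∀ (y : X), y ≠ 0 → ‖(‖y‖⁻¹ • y)‖ = 1 := by
      intro y hy
      have hnorm : ‖y‖ ≠ 0 := norm_ne_zero_iff.2 hy
      rw [norm_smul, norm_inv, norm_norm, inv_mul_cancel₀ hnorm]
    -- lower bound on the unit sphere via Cauchy–Schwarz
    have hCS : ∀ x : X, ‖x‖ = 1 →
        1 ≤ c * ∑ i ∈ Finset.range (n + 1), (P i (fun _ => x)) ^ 2 := by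
      intro x hx
      have h1 : η ≤ ∑ i ∈ Finset.range (n + 1), |P i (fun _ => x)| := by
        calc η ≤ |p x| := hsep x hx
          _ = |∑ i ∈ Finset.range (n + 1), P i (fun _ => x)| := by rw [hp x]
          _ ≤ ∑ i ∈ Finset.range (n + 1), |P i (fun _ => x)| :=
              Finset.abs_sum_le_sum_abs _ _
      have h2 : (∑ i ∈ Finset.range (n + 1), |P i (fun _ => x)|) ^ 2
          ≤ (n + 1) * ∑ i ∈ Finset.range (n + 1), (P i (fun _ => x)) ^ 2 := by
        have h := sq_sum_le_card_mul_sum_sq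
          (s := Finset.range (n + 1)) (f := fun i => |P i (fun _ => x)|)
        simpa [sq_abs] using h
      have h3 : η ^ 2 ≤ (n + 1) * ∑ i ∈ Finset.range (n + 1), (P i (fun _ => x)) ^ 2 :=
        le_trans (pow_le_pow_left₀ (le_of_lt hη) h1 2) h2
      rw [hc, div_mul_eq_mul_div, le_div_iff₀ (by positivity), one_mul]
      calc η ^ 2 ≤ (n + 1) * ∑ i ∈ Finset.range (n + 1), (P i (fun _ => x)) ^ 2 := h3
        _ = (↑n + 1) * ∑ i ∈ Finset.range (n + 1), (P i (fun _ => x)) ^ 2 := by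
            push_cast; ring
    refine ⟨fun y => c * ∑ i ∈ Finset.range (n + 1), (P i (fun _ => y)) ^ 2, ?_, ?_, ?_⟩
    · -- `q` is a polynomial function
      have h := isPolynomialFun_sum (Finset.range (n + 1))
        (fun i y => (c • mulCMM (P i) (P i)) (fun _ => y))
        (fun i _ => isPolynomialFun_single _)
      have heq : (fun y : X => c * ∑ i ∈ Finset.range (n + 1), (P i (fun _ => y)) ^ 2)
          = fun y => ∑ i ∈ Finset.range (n + 1), (c • mulCMM (P i) (P i)) (fun _ => y) :=
        funext fun y => (hqval y).symm
      rw [heq]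
      exact h
    · -- lower estimate
      intro y hy1
      dsimp only at hy1 ⊢
      by_cases hy : y = 0
      · subst hy
        rw [norm_zero, zero_pow (by omega : 2 * n ≠ 0)]
        exact mul_nonneg (le_of_lt hcpos) (Finset.sum_nonneg fun i _ => sq_nonneg _)
      · set x := ‖y‖⁻¹ • y with hxdef
        have hx1 : ‖x‖ = 1 := hxunit y hy
        have hsum : ∀ i, (P i (fun _ => y)) ^ 2 = ‖y‖ ^ (2 * i) * (P i (fun _ => x)) ^ 2 := by
          intro i
          rw [hscale y hy i, mul_pow, ← pow_mul, Nat.mul_comm i 2]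
        have ht1 : ‖y‖ ≤ 1 := by
          by_contra ht
          push_neg at ht
          have hge : (1:ℝ) ≤ c * ∑ i ∈ Finset.range (n + 1), (P i (fun _ => y)) ^ 2 := by
            calc (1:ℝ) ≤ c * ∑ i ∈ Finset.range (n + 1), (P i (fun _ => x)) ^ 2 := hCS x hx1
              _ ≤ c * ∑ i ∈ Finset.range (n + 1), (P i (fun _ => y)) ^ 2 := by
                  refine mul_le_mul_of_nonneg_left (Finset.sum_le_sum fun i _ => ?_)
                    (le_of_lt hcpos)
                  rw [hsum i]
                  have h1y : (1:ℝ) ≤ ‖y‖ ^ (2 * i) := one_le_pow₀ (le_of_lt ht)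
                  nlinarith [sq_nonneg (P i (fun _ => x))]
          linarith
        calc ‖y‖ ^ (2 * n)
            = ‖y‖ ^ (2 * n) * 1 := by ring
          _ ≤ ‖y‖ ^ (2 * n) * (c * ∑ i ∈ Finset.range (n + 1), (P i (fun _ => x)) ^ 2) :=
              mul_le_mul_of_nonneg_left (hCS x hx1) (by positivity)
          _ = c * ∑ i ∈ Finset.range (n + 1), ‖y‖ ^ (2 * n) * (P i (fun _ => x)) ^ 2 := by
              rw [mul_left_comm, Finset.mul_sum]
          _ ≤ c * ∑ i ∈ Finset.range (n + 1), (P i (fun _ => y)) ^ 2 := by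
              refine mul_le_mul_of_nonneg_left (Finset.sum_le_sum fun i hi => ?_)
                (le_of_lt hcpos)
              rw [hsum i]
              refine mul_le_mul_of_nonneg_right ?_ (sq_nonneg _)
              refine pow_le_pow_of_le_one (norm_nonneg y) ht1 ?_
              have := Finset.mem_range.1 hi
              omega
    · -- upper estimate
      refine ⟨c * (∑ i ∈ Finset.range (n + 1), ‖P i‖ ^ 2) + 1, by positivity, fun y => ?_⟩
      dsimp only
      set M := max ‖y‖ (‖y‖ ^ (2 * n)) with hM
      have hM0 : 0 ≤ M := le_trans (norm_nonneg y) (le_max_left _ _)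
      have hterm : ∀ i ∈ Finset.range (n + 1),
          (P i (fun _ => y)) ^ 2 ≤ ‖P i‖ ^ 2 * M := by
        intro i hi
        by_cases hi0 : i = 0
        · subst hi0
          calc (P 0 (fun _ => y)) ^ 2 = 0 := by rw [hP0 y]; ring
            _ ≤ ‖P 0‖ ^ 2 * M := mul_nonneg (sq_nonneg _) hM0
        · have h1i : 1 ≤ i := Nat.one_le_iff_ne_zero.2 hi0
          have hle : |P i (fun _ => y)| ≤ ‖P i‖ * ‖y‖ ^ i := by
            have h := (P i).le_opNorm (fun _ => y)
            simpa [Finset.prod_const] using h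
          have hsq : (P i (fun _ => y)) ^ 2 ≤ ‖P i‖ ^ 2 * ‖y‖ ^ (2 * i) := by
            have h := mul_self_le_mul_self (abs_nonneg _) hle
            calc (P i (fun _ => y)) ^ 2 = |P i (fun _ => y)| * |P i (fun _ => y)| := by
                  rw [pow_two]
                  exact (abs_mul_abs_self _).symm
              _ ≤ (‖P i‖ * ‖y‖ ^ i) * (‖P i‖ * ‖y‖ ^ i) := h
              _ = ‖P i‖ ^ 2 * ‖y‖ ^ (2 * i) := by rw [two_mul, pow_add]; ring
          refine le_trans hsq (mul_le_mul_of_nonneg_left ?_ (by positivity))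
          -- ‖y‖ ^ (2 i) ≤ M
          rcases le_or_gt ‖y‖ 1 with h1 | h1
          · have hstep : ‖y‖ ^ (2 * i) ≤ ‖y‖ ^ 1 :=
              pow_le_pow_of_le_one (norm_nonneg y) h1 (by omega)
            rw [pow_one] at hstep
            exact le_trans hstep (le_max_left _ _)
          · have hstep : ‖y‖ ^ (2 * i) ≤ ‖y‖ ^ (2 * n) := by
              refine pow_le_pow_right₀ (le_of_lt h1) ?_
              have := Finset.mem_range.1 hi
              omega
            exact le_trans hstep (le_max_right _ _)
      calc c * ∑ i ∈ Finset.range (n + 1), (P i (fun _ => y)) ^ 2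
          ≤ c * ∑ i ∈ Finset.range (n + 1), ‖P i‖ ^ 2 * M :=
            mul_le_mul_of_nonneg_left (Finset.sum_le_sum hterm) (le_of_lt hcpos)
        _ = c * (∑ i ∈ Finset.range (n + 1), ‖P i‖ ^ 2) * M := by
            rw [← Finset.sum_mul]; ring
        _ ≤ (c * (∑ i ∈ Finset.range (n + 1), ‖P i‖ ^ 2) + 1) * M := by
            nlinarith [hM0]
  · -- trivial space: every vector is `0`
    have hall : ∀ y : X, y = 0 := by
      intro y
      by_contra hy
      exact hX ⟨‖y‖⁻¹ • y, by
        rw [norm_smul, norm_inv, norm_norm, inv_mul_cancel₀ (norm_ne_zero_iff.2 hy)]⟩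
    refine ⟨fun _ => (0 : ℝ) ^ (2 * n), ?_, ?_, 1, one_pos, ?_⟩
    · have h := isPolynomialFun_single (X := X)
        (ContinuousMultilinearMap.constOfIsEmpty ℝ (fun _ : Fin 0 => X) ((0:ℝ) ^ (2 * n)))
      simpa using h
    · intro y _
      rw [hall y, norm_zero]
    · intro y
      rw [hall y, norm_zero, one_mul]
      exact le_max_right _ _
end

section
/- Let X be a separable real Banach space, G ⊆ X a bounded open set, and let q be a nonnegative polynomial on X with q(0) = 0 such that ‖y‖_X^{2n} ≤ q(y) whenever q(y) < 1 (where 2n is the degree of q). Let {x_j}_{j≥1} be a dense sequence in G, let 0 < γ₂ < γ₃ < 1, and set C_j^2 = {x ∈ X : q(x − x_j) < γ₂} and C_j^3 = {x ∈ X : q(x − x_j) < γ₃}. Then there exists a sequence of functions ψ_j : G → ℝ (j ≥ 1), each real analytic on G, which is uniformly Lipschitz on G (a single Lipschitz constant works for all j), such that: (i) ψ_j(x) ≥ 1 for all x ∈ G \ C_j^3; (ii) for each x ∈ G there is a j₀ with ψ_{j₀}(x) < 1/2; (iii) for each x ∈ G there exist j_x ∈ ℕ and δ > 0 such that |ψ_j(y)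 − ψ_j(x)| < 1/10 whenever y ∈ G, ‖y − x‖_X < δ and j > j_x, and moreover ψ_j(x) > 1 for all j > j_x. -/
open scoped NNReal

set_option maxHeartbeats 1000000

/-- Real logarithm is analytic at positive points. -/
lemma analyticAt_rlog {x : ℝ} (hx : 0 < x) : AnalyticAt ℝ Real.log x := by
  have h1 : AnalyticAt ℝ (fun t : ℝ => (t : ℂ)) x := Complex.ofRealCLM.analyticAt x
  have h2 : AnalyticAt ℝ (Complex.log) ((x : ℝ) : ℂ) :=
    (analyticAt_clog (Complex.ofReal_mem_slitPlane.2 hx)).restrictScalars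
  have h3 : AnalyticAt ℝ (fun t : ℝ => Complex.log (t : ℂ)) x := h2.comp h1
  have h4 : AnalyticAt ℝ (fun t : ℝ => (Complex.log (t : ℂ)).re) x :=
    (Complex.reCLM.analyticAt _).comp h3
  have : Real.log = fun t : ℝ => (Complex.log (t : ℂ)).re :=
    funext fun t => (Complex.log_ofReal_re t).symm
  rw [this]
  exact h4

noncomputable def sigmafn (s : ℝ) : ℝ := (1 + Real.exp (-s))⁻¹

lemma sigmafn_hasDerivAt (s : ℝ) :
    HasDerivAt sigmafn (Real.exp (-s) / (1 + Real.exp (-s)) ^ 2) s := by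
  have h1 : HasDerivAt (fun t : ℝ => -t) (-1) s := (hasDerivAt_id s).neg
  have h2 : HasDerivAt (fun t : ℝ => Real.exp (-t)) (Real.exp (-s) * (-1)) s :=
    (Real.hasDerivAt_exp (-s)).comp s h1
  have h3 : HasDerivAt (fun t : ℝ => 1 + Real.exp (-t)) (Real.exp (-s) * (-1)) s :=
    h2.const_add 1
  have hne : (1 + Real.exp (-s)) ≠ 0 := by positivity
  have h4 := h3.inv hne
  rw [show Real.exp (-s) / (1 + Real.exp (-s)) ^ 2 = -(Real.exp (-s) * -1) / (1 + Real.exp (-s)) ^ 2 by ring]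
  exact h4

lemma sigmafn_lipschitz : LipschitzWith 1 sigmafn := by
  apply lipschitzWith_of_nnnorm_deriv_le
  · exact fun s => (sigmafn_hasDerivAt s).differentiableAt
  · intro s
    rw [(sigmafn_hasDerivAt s).deriv]
    rw [← NNReal.coe_le_coe, coe_nnnorm, NNReal.coe_one, Real.norm_eq_abs]
    have he : 0 < Real.exp (-s) := Real.exp_pos _
    rw [abs_of_nonneg (by positivity)]
    rw [div_le_one (by positivity)]
    nlinarith

lemma sigmafn_pos (s : ℝ) : 0 < sigmafn s := by
  unfold sigmafn; positivity

lemma sigmafn_le_exp (s : ℝ) : sigmafn s ≤ Real.exp s := by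
  unfold sigmafn
  have he : 0 < Real.exp (-s) := Real.exp_pos _
  have : (1 + Real.exp (-s))⁻¹ ≤ (Real.exp (-s))⁻¹ := by
    apply inv_anti₀ he; linarith
  calc (1 + Real.exp (-s))⁻¹ ≤ (Real.exp (-s))⁻¹ := this
    _ = Real.exp s := by rw [Real.exp_neg, inv_inv]

lemma one_sub_exp_le_sigmafn (s : ℝ) : 1 - Real.exp (-s) ≤ sigmafn s := by
  unfold sigmafn
  have he : 0 < Real.exp (-s) := Real.exp_pos _
  set t := Real.exp (-s)
  have ht : 0 < 1 + t := by positivity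
  have h := mul_inv_cancel₀ (ne_of_gt ht)
  have hinv : 0 ≤ (1 + t)⁻¹ := by positivity
  nlinarith [mul_nonneg (le_of_lt he) hinv]


/-- Existence of the functionals `ψ_j` of Lemma 4: real analytic on `G`, uniformly Lipschitz
on `G`, at least `1` off `C_j³ = {x : q(x - x_j) < γ₃}`, smaller than `1/2` at some index at
every point, and eventually stable (and `> 1`) at every point. -/
theorem exists_psi_functionals
    {X : Type*} [NormedAddCommGroup X] [NormedSpace ℝ X] [CompleteSpace X]
    [TopologicalSpace.SeparableSpace X]
    (G : Set X) (hGopen : IsOpen G) (hGbdd : Bornology.IsBounded G)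
    (n : ℕ) (q : X → ℝ)
    (P : (i : ℕ) → ContinuousMultilinearMap ℝ (fun _ : Fin i => X) ℝ)
    (hq : ∀ x, q x = ∑ i ∈ Finset.range (2 * n + 1), P i (fun _ => x))
    (hq0 : q 0 = 0) (hqnonneg : ∀ y : X, 0 ≤ q y)
    (hqlower : ∀ y : X, q y < 1 → ‖y‖ ^ (2 * n) ≤ q y)
    (xs : ℕ → X) (hxsmem : ∀ j, xs j ∈ G) (hxsdense : G ⊆ closure (Set.range xs))
    (γ₂ γ₃ : ℝ) (hγ₂ : 0 < γ₂) (hγ₂₃ : γ₂ < γ₃) (hγ₃ : γ₃ < 1) :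
    ∃ (ψ : ℕ → X → ℝ) (L : ℝ≥0),
      (∀ j, AnalyticOnNhd ℝ (ψ j) G) ∧
      (∀ j, LipschitzOnWith L (ψ j) G) ∧
      (∀ j, ∀ x ∈ G \ {y : X | q (y - xs j) < γ₃}, 1 ≤ ψ j x) ∧
      (∀ x ∈ G, ∃ j₀, ψ j₀ x < 1 / 2) ∧
      (∀ x ∈ G, ∃ (jx : ℕ) (δ : ℝ), 0 < δ ∧
        (∀ y ∈ G, ‖y - x‖ < δ → ∀ j > jx, |ψ j y - ψ j x| < 1 / 10) ∧
        ∀ j > jx, 1 < ψ j x) := by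
  classical
  have hγ₂1 : γ₂ < 1 := hγ₂₃.trans hγ₃
  have hγ₂ne : γ₂ ≠ 0 := ne_of_gt hγ₂
  -- bound on G
  obtain ⟨R0, hR0⟩ := isBounded_iff_forall_norm_le.mp hGbdd
  set R : ℝ := max R0 0 with hRdef
  have hR : ∀ x ∈ G, ‖x‖ ≤ R := fun x hx => le_trans (hR0 x hx) (le_max_left _ _)
  have hRnn : (0:ℝ) ≤ R := le_max_right _ _
  set B : ℝ := 1 + 2 * R with hBdef
  have hB1 : (1:ℝ) ≤ B := by rw [hBdef]; linarith
  have hB0 : (0:ℝ) < B := by linarith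
  set Lq : ℝ := (∑ m ∈ Finset.range (2*n+1), ‖P m‖ * m) * B ^ (2*n) with hLqdef
  have hLq0 : 0 ≤ Lq := by
    apply mul_nonneg
    · exact Finset.sum_nonneg fun m _ => by positivity
    · positivity
  -- uniform Lipschitz bound for translates of q on G
  have hqlip : ∀ c ∈ G, ∀ x ∈ G, ∀ y ∈ G, |q (x - c) - q (y - c)| ≤ Lq * ‖x - y‖ := by
    intro c hc x hx y hy
    rw [hq (x - c), hq (y - c), ← Finset.sum_sub_distrib]
    refine le_trans (Finset.abs_sum_le_sum_abs _ _) ?_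
    rw [hLqdef, Finset.sum_mul, Finset.sum_mul]
    apply Finset.sum_le_sum
    intro m hm
    have hm2n : m ≤ 2 * n := by
      have := Finset.mem_range.mp hm; omega
    set v : Fin m → X := fun _ => x - c with hv
    set w : Fin m → X := fun _ => y - c with hw
    have hvn : ‖v‖ ≤ 2 * R := by
      rw [pi_norm_le_iff_of_nonneg (by positivity)]
      intro i
      calc ‖x - c‖ ≤ ‖x‖ + ‖c‖ := norm_sub_le _ _
        _ ≤ 2 * R := by have h1 := hR x hx; have h2 := hR c hc; linarith
    have hwn : ‖w‖ ≤ 2 * R := by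
      rw [pi_norm_le_iff_of_nonneg (by positivity)]
      intro i
      calc ‖y - c‖ ≤ ‖y‖ + ‖c‖ := norm_sub_le _ _
        _ ≤ 2 * R := by have h1 := hR y hy; have h2 := hR c hc; linarith
    have hvw : ‖v - w‖ ≤ ‖x - y‖ := by
      rw [pi_norm_le_iff_of_nonneg (norm_nonneg _)]
      intro i
      show ‖(x - c) - (y - c)‖ ≤ ‖x - y‖
      rw [sub_sub_sub_cancel_right]
    have hmax : max ‖v‖ ‖w‖ ^ (m - 1) ≤ B ^ (2 * n) := by
      calc max ‖v‖ ‖w‖ ^ (m-1) ≤ B ^ (m-1) := by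
            apply pow_le_pow_left₀ (le_max_iff.mpr (Or.inl (norm_nonneg _)))
            exact le_trans (max_le hvn hwn) (by linarith)
        _ ≤ B ^ (2*n) := pow_le_pow_right₀ hB1 (by omega)
    have key := (P m).norm_image_sub_le v w
    simp only [Fintype.card_fin, Real.norm_eq_abs] at key
    calc |P m v - P m w| ≤ ‖P m‖ * m * max ‖v‖ ‖w‖ ^ (m-1) * ‖v - w‖ := key
      _ ≤ ‖P m‖ * m * B^(2*n) * ‖x - y‖ := by
          apply mul_le_mul (mul_le_mul_of_nonneg_left hmax (by positivity)) hvw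
            (norm_nonneg _) (by positivity)
      _ = ‖P m‖ * ↑m * B^(2*n) * ‖x-y‖ := rfl
  -- constants
  set k : ℕ → ℝ := fun j => (Real.log (j+1) + 1) * (16 / γ₂) with hkdef
  have hlogj : ∀ j : ℕ, (0:ℝ) ≤ Real.log (j+1) := by
    intro j
    apply Real.log_nonneg
    have : (0:ℝ) ≤ (j:ℝ) := Nat.cast_nonneg j
    linarith
  have hk : ∀ j, 0 < k j := by
    intro j
    have h := hlogj j
    have h16 : 0 < 16/γ₂ := by positivity
    simp only [hkdef]
    nlinarith
  set K : ℝ := Real.log 100 * (16 / γ₂) with hKdef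
  have hlog100 : 0 < Real.log 100 := Real.log_pos (by norm_num)
  have hK0 : 0 < K := by
    have h16 : 0 < 16/γ₂ := by positivity
    simp only [hKdef]
    exact mul_pos hlog100 h16
  have hK16 : K * (γ₂ / 16) = Real.log 100 := by
    simp only [hKdef]; field_simp
  -- the building blocks
  set T : ℕ → X → ℝ := fun j x =>
    (∑ i ∈ Finset.range j, Real.exp (-(k j) * q (x - xs i))) + Real.exp (-(k j)) with hTdef
  have hT0 : ∀ j x, 0 < T j x := fun j x =>
    add_pos_of_nonneg_of_pos (Finset.sum_nonneg fun i _ => (Real.exp_pos _).le) (Real.exp_pos _)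
  set u : ℕ → X → ℝ := fun j x => Real.log (T j x) / k j with hudef
  set arg : ℕ → X → ℝ := fun j x => K * (γ₂/8) + K * u j x with hargdef
  set ψ : ℕ → X → ℝ := fun j x => q (x - xs j) / γ₂ + 2 * sigmafn (arg j x) with hψdef
  -- one-sided Lipschitz estimate for u
  have hulip1 : ∀ j, ∀ x ∈ G, ∀ y ∈ G, u j x ≤ u j y + Lq * ‖x - y‖ := by
    intro j x hx y hy
    have hd0 : 0 ≤ Lq * ‖x - y‖ := mul_nonneg hLq0 (norm_nonneg _)
    have hTle : T j x ≤ Real.exp (k j * (Lq * ‖x - y‖)) * T j y := by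
      simp only [hTdef]
      rw [mul_add, Finset.mul_sum]
      apply add_le_add
      · apply Finset.sum_le_sum
        intro i _
        rw [← Real.exp_add]
        apply Real.exp_le_exp.mpr
        have h := hqlip (xs i) (hxsmem i) x hx y hy
        have h2 : q (y - xs i) - q (x - xs i) ≤ Lq * ‖x - y‖ := by
          have := abs_le.mp h; linarith [this.1]
        nlinarith [hk j]
      · have h1 : (1:ℝ) ≤ Real.exp (k j * (Lq * ‖x - y‖)) := by
          rw [← Real.exp_zero]
          apply Real.exp_le_exp.mpr
          exact mul_nonneg (hk j).le hd0
        nlinarith [Real.exp_pos (-(k j))]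
    have hlog := Real.log_le_log (hT0 j x) hTle
    rw [Real.log_mul (Real.exp_ne_zero _) (ne_of_gt (hT0 j y)), Real.log_exp] at hlog
    simp only [hudef]
    rw [div_le_iff₀ (hk j)]
    have hkne : k j ≠ 0 := ne_of_gt (hk j)
    have hexp : (Real.log (T j y) / k j + Lq * ‖x - y‖) * k j
        = Real.log (T j y) + k j * (Lq * ‖x - y‖) := by
      field_simp
    rw [hexp]
    linarith
  have hulip : ∀ j, ∀ x ∈ G, ∀ y ∈ G, |u j x - u j y| ≤ Lq * ‖x - y‖ := by
    intro j x hx y hy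
    rw [abs_sub_le_iff]
    constructor
    · linarith [hulip1 j x hx y hy]
    · have h := hulip1 j y hy x hx
      rw [norm_sub_rev] at h
      linarith
  -- lower bound for sigma when some earlier center is close
  have hsig_high : ∀ j x, (∃ i, i < j ∧ q (x - xs i) ≤ γ₂/16) →
      99/100 ≤ sigmafn (arg j x) := by
    rintro j x ⟨i, hij, hqi⟩
    have hTge : Real.exp (-(k j) * (γ₂/16)) ≤ T j x := by
      have h1 : Real.exp (-(k j) * (γ₂/16)) ≤ Real.exp (-(k j) * q (x - xs i)) := by
        apply Real.exp_le_exp.mpr; nlinarith [hk j]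
      have h2 : Real.exp (-(k j) * q (x - xs i)) ≤
          ∑ i' ∈ Finset.range j, Real.exp (-(k j) * q (x - xs i')) :=
        Finset.single_le_sum (f := fun i' => Real.exp (-(k j) * q (x - xs i')))
          (fun i' _ => (Real.exp_pos _).le) (Finset.mem_range.mpr hij)
      have h3 : (∑ i' ∈ Finset.range j, Real.exp (-(k j) * q (x - xs i'))) ≤ T j x := by
        simp only [hTdef]
        exact le_add_of_nonneg_right (Real.exp_pos _).le
      exact le_trans h1 (le_trans h2 h3)
    have hlogT : -(k j) * (γ₂/16) ≤ Real.log (T j x) :=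
      (Real.le_log_iff_exp_le (hT0 j x)).mpr hTge
    have hu : -(γ₂/16) ≤ u j x := by
      simp only [hudef]
      rw [le_div_iff₀ (hk j)]
      nlinarith
    have harg : Real.log 100 ≤ arg j x := by
      have h1 : K * (γ₂/16) ≤ K * (γ₂/8) + K * u j x := by nlinarith
      rw [hK16] at h1
      simpa [hargdef] using h1
    have h2 : Real.exp (-(arg j x)) ≤ 1/100 := by
      have h100 : Real.exp (-(Real.log 100)) = 1/100 := by
        rw [Real.exp_neg, Real.exp_log (by norm_num : (0:ℝ) < 100)]
        norm_num
      have := Real.exp_le_exp.mpr (neg_le_neg harg)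
      linarith
    have := one_sub_exp_le_sigmafn (arg j x)
    linarith
  -- upper bound for sigma when all earlier centers are far
  have hsig_low : ∀ j x, (∀ i, i < j → γ₂/4 ≤ q (x - xs i)) →
      sigmafn (arg j x) ≤ 1/100 := by
    intro j x hall
    have hTle : T j x ≤ ((j:ℝ)+1) * Real.exp (-(k j) * (γ₂/4)) := by
      have hsum : (∑ i ∈ Finset.range j, Real.exp (-(k j) * q (x - xs i)))
          ≤ (j:ℝ) * Real.exp (-(k j)*(γ₂/4)) := by
        calc (∑ i ∈ Finset.range j, Real.exp (-(k j) * q (x - xs i)))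
            ≤ ∑ _i ∈ Finset.range j, Real.exp (-(k j)*(γ₂/4)) := by
              apply Finset.sum_le_sum
              intro i hi
              apply Real.exp_le_exp.mpr
              have := hall i (Finset.mem_range.mp hi)
              nlinarith [hk j]
          _ = (j:ℝ) * Real.exp (-(k j)*(γ₂/4)) := by
              rw [Finset.sum_const, Finset.card_range, nsmul_eq_mul]
      have hph : Real.exp (-(k j)) ≤ Real.exp (-(k j) * (γ₂/4)) := by
        apply Real.exp_le_exp.mpr
        nlinarith [hk j]
      simp only [hTdef]
      nlinarith
    have hlogT : Real.log (T j x) ≤ Real.log ((j:ℝ)+1) + (-(k j) * (γ₂/4)) := by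
      have h1 := Real.log_le_log (hT0 j x) hTle
      rwa [Real.log_mul (by positivity) (Real.exp_ne_zero _), Real.log_exp] at h1
    have hlogk : Real.log ((j:ℝ)+1) ≤ k j * (γ₂/16) := by
      have : k j * (γ₂/16) = Real.log ((j:ℝ)+1) + 1 := by
        simp only [hkdef]; field_simp
      rw [this]
      linarith [hlogj j]
    have hu : u j x ≤ γ₂/16 - γ₂/4 := by
      simp only [hudef]
      rw [div_le_iff₀ (hk j)]
      nlinarith [hk j]
    have harg : arg j x ≤ -(Real.log 100) := by
      have h1 : K * (γ₂/8) + K * u j x ≤ K * (γ₂/8) + K * (γ₂/16 - γ₂/4) := by nlinarith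
      have h2 : K * (γ₂/8) + K*(γ₂/16 - γ₂/4) = -(K * (γ₂/16)) := by ring
      rw [h2, hK16] at h1
      simpa [hargdef] using h1
    calc sigmafn (arg j x) ≤ Real.exp (arg j x) := sigmafn_le_exp _
      _ ≤ Real.exp (-(Real.log 100)) := Real.exp_le_exp.mpr harg
      _ = 1/100 := by
          rw [Real.exp_neg, Real.exp_log (by norm_num : (0:ℝ) < 100)]
          norm_num
  -- analyticity of translates of q
  have hqanal : ∀ (g : X → X) (z : X), AnalyticAt ℝ g z →
      AnalyticAt ℝ (fun y => q (g y)) z := by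
    intro g z hg
    have hfun : (fun y : X => q (g y))
        = fun y => ∑ m ∈ Finset.range (2*n+1), P m (fun _ => g y) := funext fun y => hq _
    rw [hfun]
    apply Finset.analyticAt_fun_sum
    intro m _
    have hpi : AnalyticAt ℝ (fun y : X => (fun _ : Fin m => g y)) z :=
      AnalyticAt.pi (fun _ => hg)
    exact ((P m).analyticAt).comp hpi
  -- density gives arbitrarily close centers
  have hnear : ∀ x ∈ G, ∀ ε : ℝ, 0 < ε → ∃ j, q (x - xs j) < ε := by
    intro x hx ε hε
    have hcont : ContinuousAt (fun y : X => q (x - y)) x :=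
      (hqanal (fun y => x - y) x (analyticAt_const.sub (analyticAt_id))).continuousAt
    rw [Metric.continuousAt_iff] at hcont
    obtain ⟨δ, hδ0, hδ⟩ := hcont ε hε
    obtain ⟨z, hzr, hzd⟩ := Metric.mem_closure_iff.mp (hxsdense hx) δ hδ0
    obtain ⟨j, rfl⟩ := hzr
    refine ⟨j, ?_⟩
    have h := hδ (show dist (xs j) x < δ by rwa [dist_comm])
    rw [Real.dist_eq] at h
    have h0 : q (x - x) = 0 := by rw [sub_self]; exact hq0
    rw [h0, sub_zero] at h
    exact lt_of_le_of_lt (le_abs_self _) h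
  -- analyticity of ψ
  have hψanal : ∀ j, AnalyticOnNhd ℝ (ψ j) G := by
    intro j z _
    have hTa : AnalyticAt ℝ (T j) z := by
      simp only [hTdef]
      apply AnalyticAt.add
      · apply Finset.analyticAt_fun_sum
        intro i _
        exact (analyticAt_const.mul
          (hqanal (fun y => y - xs i) z (analyticAt_id.sub analyticAt_const))).rexp
      · exact analyticAt_const
    have hua : AnalyticAt ℝ (u j) z := by
      simp only [hudef]
      exact AnalyticAt.div ((analyticAt_rlog (hT0 j z)).comp hTa) analyticAt_const
        (ne_of_gt (hk j))
    have harga : AnalyticAt ℝ (arg j) z := by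
      simp only [hargdef]
      exact analyticAt_const.add (analyticAt_const.mul hua)
    have hsiga : AnalyticAt ℝ (fun x => sigmafn (arg j x)) z := by
      unfold sigmafn
      have hpos : (0:ℝ) < 1 + Real.exp (-(arg j z)) := by positivity
      exact (analyticAt_const.add harga.neg.rexp).inv (ne_of_gt hpos)
    simp only [hψdef]
    exact ((hqanal (fun y => y - xs j) z (analyticAt_id.sub analyticAt_const)).div
      analyticAt_const hγ₂ne).add (analyticAt_const.mul hsiga)
  -- uniform Lipschitz estimate for ψ
  set L0 : ℝ := Lq / γ₂ + 2 * (K * Lq) with hL0def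
  have hL00 : 0 ≤ L0 := by
    rw [hL0def]; positivity
  have hψlip : ∀ j, ∀ x ∈ G, ∀ y ∈ G, |ψ j x - ψ j y| ≤ L0 * ‖x - y‖ := by
    intro j x hx y hy
    have h1 : |q (x - xs j) - q (y - xs j)| ≤ Lq * ‖x-y‖ := hqlip (xs j) (hxsmem j) x hx y hy
    have h2 : |sigmafn (arg j x) - sigmafn (arg j y)| ≤ |arg j x - arg j y| := by
      have := sigmafn_lipschitz.dist_le_mul (arg j x) (arg j y)
      simpa [Real.dist_eq] using this
    have h3 : |arg j x - arg j y| = K * |u j x - u j y| := by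
      have : arg j x - arg j y = K * (u j x - u j y) := by simp only [hargdef]; ring
      rw [this, abs_mul, abs_of_pos hK0]
    have h4 := hulip j x hx y hy
    have e1 : ψ j x - ψ j y = (q (x - xs j) - q (y - xs j))/γ₂
        + 2*(sigmafn (arg j x) - sigmafn (arg j y)) := by
      simp only [hψdef]; ring
    rw [e1]
    calc |(q (x - xs j) - q (y - xs j))/γ₂ + 2*(sigmafn (arg j x) - sigmafn (arg j y))|
        ≤ |(q (x - xs j) - q (y - xs j))/γ₂| + |2*(sigmafn (arg j x) - sigmafn (arg j y))| :=
          abs_add_le _ _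
      _ = |q (x - xs j) - q (y - xs j)|/γ₂ + 2*|sigmafn (arg j x) - sigmafn (arg j y)| := by
          rw [abs_div, abs_of_pos hγ₂, abs_mul]; norm_num
      _ ≤ (Lq*‖x-y‖)/γ₂ + 2*(K*(Lq*‖x-y‖)) := by
          apply add_le_add
          · exact (div_le_div_iff_of_pos_right hγ₂).mpr h1
          · have : |sigmafn (arg j x) - sigmafn (arg j y)| ≤ K*(Lq*‖x-y‖) := by
              refine h2.trans ?_
              rw [h3]
              exact mul_le_mul_of_nonneg_left h4 hK0.le
            linarith
      _ = L0 * ‖x-y‖ := by rw [hL0def]; ring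
  -- assemble
  refine ⟨ψ, Real.toNNReal L0, hψanal, ?_, ?_, ?_, ?_⟩
  · -- Lipschitz
    intro j
    apply LipschitzOnWith.of_dist_le_mul
    intro x hx y hy
    rw [Real.dist_eq, dist_eq_norm, Real.coe_toNNReal _ hL00]
    exact hψlip j x hx y hy
  · -- (i)
    intro j x hx
    obtain ⟨hxG, hxC⟩ := hx
    have hq3 : γ₃ ≤ q (x - xs j) := not_lt.mp hxC
    have hd : (1:ℝ) < γ₃/γ₂ := (one_lt_div hγ₂).mpr hγ₂₃
    have hsp := sigmafn_pos (arg j x)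
    have hdd : γ₃/γ₂ ≤ q (x - xs j)/γ₂ := (div_le_div_iff_of_pos_right hγ₂).mpr hq3
    simp only [hψdef]
    linarith
  · -- (ii)
    intro x hx
    have hex : ∃ j, q (x - xs j) < γ₂/4 := hnear x hx (γ₂/4) (by positivity)
    refine ⟨Nat.find hex, ?_⟩
    have hfound := Nat.find_spec hex
    have hprev : ∀ i, i < Nat.find hex → γ₂/4 ≤ q (x - xs i) := fun i hi =>
      not_lt.mp (Nat.find_min hex hi)
    have hs := hsig_low (Nat.find hex) x hprev
    have hqq : q (x - xs (Nat.find hex))/γ₂ < 1/4 := by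
      rw [div_lt_iff₀ hγ₂]
      linarith
    simp only [hψdef]
    linarith
  · -- (iii)
    intro x hx
    obtain ⟨jx, hjx⟩ := hnear x hx (γ₂/16) (by positivity)
    refine ⟨jx, 1/(10*(L0+1)), by positivity, ?_, ?_⟩
    · intro y hy hyx j _
      have h := hψlip j y hy x hx
      have h1 : L0 * ‖y-x‖ ≤ L0 * (1/(10*(L0+1))) :=
        mul_le_mul_of_nonneg_left hyx.le hL00
      have h2 : L0 * (1/(10*(L0+1))) < 1/10 := by
        rw [mul_one_div, div_lt_div_iff₀ (by positivity) (by norm_num)]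
        nlinarith
      calc |ψ j y - ψ j x| ≤ L0 * ‖y - x‖ := h
        _ ≤ L0 * (1/(10*(L0+1))) := h1
        _ < 1/10 := h2
    · intro j hj
      have hs := hsig_high j x ⟨jx, hj, hjx.le⟩
      have hqx : 0 ≤ q (x - xs j)/γ₂ := div_nonneg (hqnonneg _) hγ₂.le
      simp only [hψdef]
      linarith
end

section
/- The Minkowski functional ‖·‖ of W = {x ∈ c₀ : Σ_{n=1}^∞ x_n^{2n} ≤ 1} is a norm on c₀ equivalent to the sup norm: for all x ∈ c₀, (1/2)‖x‖ ≤ ‖x‖_{c₀} ≤ ‖x‖, where ‖x‖_{c₀} = sup_n |x_n|. -/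
open scoped ENNReal

noncomputable section

/-- `ℓ_∞`: bounded real sequences with the sup norm. -/
abbrev Linf := lp (fun _ : ℕ => ℝ) ⊤

/-- `c₀` viewed as the subset of `ℓ_∞` of sequences tending to `0`;
the norm of `ℓ_∞` restricts to the sup norm on it. -/
def c0Set : Set Linf := {x | Filter.Tendsto (fun n => x n) Filter.atTop (nhds (0 : ℝ))}

/-- `C(x) = ∑_{n≥1} x_n^{2n}` (indexed here by `n : ℕ` via `n ↦ n+1`). -/
def Cfun (x : Linf) : ℝ := ∑' n : ℕ, (x n) ^ (2 * (n + 1))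

/-- The Preiss norm: the Minkowski functional of `W = {x ∈ c₀ : C(x) ≤ 1}`,
i.e. `inf {t > 0 : C(t⁻¹ x) ≤ 1}`. -/
def preissNorm (x : Linf) : ℝ := sInf {t : ℝ | 0 < t ∧ Cfun (t⁻¹ • x) ≤ 1}

open Filter Set Pointwise

lemma smul_mem_c0 {x : Linf} (hx : x ∈ c0Set) (c : ℝ) : c • x ∈ c0Set := by
  have h : Filter.Tendsto (fun n => c * x n) atTop (nhds (c * 0)) := hx.const_mul c
  simpa [c0Set, lp.coeFn_smul, Pi.smul_apply, smul_eq_mul] using h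

lemma add_mem_c0 {x y : Linf} (hx : x ∈ c0Set) (hy : y ∈ c0Set) : x + y ∈ c0Set := by
  have h := hx.add hy
  simpa [c0Set, lp.coeFn_add, Pi.add_apply] using h

lemma summable_c0 {x : Linf} (hx : x ∈ c0Set) :
    Summable (fun n : ℕ => (x n) ^ (2 * (n + 1))) := by
  apply summable_of_isBigO_nat (g := fun n : ℕ => ((1:ℝ)/2) ^ n)
    (summable_geometric_of_lt_one (by norm_num) (by norm_num))
  rw [Asymptotics.isBigO_iff]
  refine ⟨1, ?_⟩
  have hev : ∀ᶠ n in atTop, |x n| ≤ 1/2 := by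
    have := hx.eventually (Metric.ball_mem_nhds (0:ℝ) (by norm_num : (0:ℝ) < 1/2))
    filter_upwards [this] with n hn
    simpa [Real.dist_eq] using le_of_lt hn
  filter_upwards [hev] with n hn
  have h1 : ‖(x n) ^ (2 * (n + 1))‖ = |x n| ^ (2 * (n + 1)) := by
    rw [Real.norm_eq_abs, abs_pow]
  rw [h1]
  have h2 : |x n| ^ (2 * (n + 1)) ≤ ((1:ℝ)/2) ^ (2 * (n + 1)) :=
    pow_le_pow_left₀ (abs_nonneg _) hn _
  have h3 : ((1:ℝ)/2) ^ (2 * (n + 1)) ≤ ((1:ℝ)/2) ^ n := by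
    apply pow_le_pow_of_le_one (by norm_num) (by norm_num)
    omega
  have : ‖((1:ℝ)/2) ^ n‖ = ((1:ℝ)/2)^n := Real.norm_of_nonneg (by positivity)
  rw [this, one_mul]
  linarith

lemma forall_abs_le {x : Linf} (hx : x ∈ c0Set) {t : ℝ} (ht : 0 < t)
    (hC : Cfun (t⁻¹ • x) ≤ 1) (n : ℕ) : |x n| ≤ t := by
  by_contra h
  push_neg at h
  have hterm : 1 < ((t⁻¹ • x) n) ^ (2 * (n + 1)) := by
    have habs : 1 < |(t⁻¹ • x) n| := by
      have : (t⁻¹ • x) n = t⁻¹ * x n := by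
        rw [lp.coeFn_smul, Pi.smul_apply, smul_eq_mul]
      rw [this, abs_mul, abs_inv, abs_of_pos ht, ← div_eq_inv_mul, lt_div_iff₀ ht, one_mul]
      exact h
    calc (1:ℝ) = 1 ^ (2 * (n + 1)) := (one_pow _).symm
      _ < |(t⁻¹ • x) n| ^ (2 * (n + 1)) := by
          apply pow_lt_pow_left₀ habs (by norm_num)
          omega
      _ = ((t⁻¹ • x) n) ^ (2 * (n + 1)) := (even_two_mul _).pow_abs _
  have hsum := summable_c0 (smul_mem_c0 hx t⁻¹)
  have hle : ((t⁻¹ • x) n) ^ (2 * (n + 1)) ≤ Cfun (t⁻¹ • x) := by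
    apply Summable.le_tsum hsum n
    intro j _
    exact (even_two_mul _).pow_nonneg _
  linarith

lemma cfun_le_of_half {x : Linf} {t : ℝ} (ht : 0 < t)
    (h : ∀ n, |x n| ≤ t / 2) : Cfun (t⁻¹ • x) ≤ 1 := by
  have hsum4 : Summable (fun n : ℕ => ((1:ℝ)/4) ^ (n + 1)) := by
    simp_rw [pow_succ']
    exact (summable_geometric_of_lt_one (by norm_num) (by norm_num)).mul_left _
  have hterm : ∀ n : ℕ, ((t⁻¹ • x) n) ^ (2 * (n + 1)) ≤ ((1:ℝ)/4) ^ (n + 1) := by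
    intro n
    have habs : |(t⁻¹ • x) n| ≤ 1/2 := by
      have heq : (t⁻¹ • x) n = t⁻¹ * x n := by
        rw [lp.coeFn_smul, Pi.smul_apply, smul_eq_mul]
      rw [heq, abs_mul, abs_inv, abs_of_pos ht, ← div_eq_inv_mul, div_le_iff₀ ht]
      have := h n
      linarith
    calc ((t⁻¹ • x) n) ^ (2 * (n + 1)) = |(t⁻¹ • x) n| ^ (2 * (n + 1)) :=
          ((even_two_mul _).pow_abs _).symm
      _ ≤ ((1:ℝ)/2) ^ (2 * (n + 1)) := pow_le_pow_left₀ (abs_nonneg _) habs _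
      _ = ((1:ℝ)/4) ^ (n + 1) := by
          rw [pow_mul]; norm_num
  have hsumx : Summable (fun n : ℕ => ((t⁻¹ • x) n) ^ (2 * (n + 1))) := by
    apply Summable.of_nonneg_of_le (fun n => (even_two_mul _).pow_nonneg _) hterm hsum4
  have : Cfun (t⁻¹ • x) ≤ ∑' n : ℕ, ((1:ℝ)/4) ^ (n + 1) :=
    Summable.tsum_le_tsum hterm hsumx hsum4
  have hval : ∑' n : ℕ, ((1:ℝ)/4) ^ (n + 1) = 1/3 := by
    simp_rw [pow_succ']
    rw [tsum_mul_left, tsum_geometric_of_lt_one (by norm_num) (by norm_num)]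
    norm_num
  rw [hval] at this
  linarith

lemma preiss_nonempty (x : Linf) : {t : ℝ | 0 < t ∧ Cfun (t⁻¹ • x) ≤ 1}.Nonempty := by
  refine ⟨2 * ‖x‖ + 1, ?_, ?_⟩
  · positivity
  · apply cfun_le_of_half (by positivity)
    intro n
    have h1 : |x n| ≤ ‖x‖ := lp.norm_apply_le_norm (by norm_num) x n
    have h2 : (0:ℝ) ≤ ‖x‖ := norm_nonneg x
    linarith

lemma preiss_bddBelow (x : Linf) : BddBelow {t : ℝ | 0 < t ∧ Cfun (t⁻¹ • x) ≤ 1} :=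
  ⟨0, fun t ht => le_of_lt ht.1⟩

lemma norm_le_preiss {x : Linf} (hx : x ∈ c0Set) : ‖x‖ ≤ preissNorm x := by
  apply le_csInf (preiss_nonempty x)
  intro t ht
  exact lp.norm_le_of_forall_le (le_of_lt ht.1) (fun n => by
    simpa [Real.norm_eq_abs] using forall_abs_le hx ht.1 ht.2 n)

lemma preiss_le_two_norm (x : Linf) : preissNorm x ≤ 2 * ‖x‖ := by
  rcases eq_or_ne x 0 with rfl | hx
  · simp only [norm_zero, mul_zero]
    apply le_of_forall_pos_le_add
    intro ε hε
    rw [zero_add]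
    apply csInf_le (preiss_bddBelow 0)
    refine ⟨hε, ?_⟩
    have : Cfun (ε⁻¹ • (0 : Linf)) = 0 := by
      simp only [smul_zero, Cfun]
      have : ∀ n : ℕ, ((0 : Linf) n) ^ (2 * (n + 1)) = 0 := by
        intro n
        rw [lp.coeFn_zero, Pi.zero_apply, zero_pow]
        omega
      simp [this]
    rw [this]; norm_num
  · have hn0 : 0 < ‖x‖ := norm_pos_iff.mpr hx
    apply csInf_le (preiss_bddBelow x)
    refine ⟨by linarith, ?_⟩
    apply cfun_le_of_half (by linarith)
    intro n
    have h1 : |x n| ≤ ‖x‖ := lp.norm_apply_le_norm (by norm_num) x n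
    linarith

lemma preiss_zero : preissNorm (0 : Linf) = 0 := by
  have h1 : preissNorm (0 : Linf) ≤ 2 * ‖(0 : Linf)‖ := preiss_le_two_norm 0
  have h2 : ‖(0 : Linf)‖ ≤ preissNorm (0 : Linf) := norm_le_preiss (by
    simp [c0Set, lp.coeFn_zero])
  simp only [norm_zero, mul_zero] at h1 h2
  linarith

lemma cfun_abs_smul (c : ℝ) (x : Linf) : Cfun (c • x) = Cfun (|c| • x) := by
  unfold Cfun
  congr 1
  ext n
  have h1 : (c • x) n = c * x n := by rw [lp.coeFn_smul, Pi.smul_apply, smul_eq_mul]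
  have h2 : (|c| • x) n = |c| * x n := by rw [lp.coeFn_smul, Pi.smul_apply, smul_eq_mul]
  rw [h1, h2]
  rw [← (even_two_mul (n+1)).pow_abs (c * x n), ← (even_two_mul (n+1)).pow_abs (|c| * x n)]
  rw [abs_mul, abs_mul, abs_abs]

/-- The Preiss norm is a norm on `c₀`, equivalent to the sup norm:
`(1/2)‖x‖ ≤ ‖x‖_{c₀} ≤ ‖x‖`. -/
theorem preissNorm_is_equivalent_norm :
    (∀ x ∈ c0Set, ∀ y ∈ c0Set, preissNorm (x + y) ≤ preissNorm x + preissNorm y) ∧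
    (∀ x ∈ c0Set, ∀ a : ℝ, preissNorm (a • x) = |a| * preissNorm x) ∧
    (∀ x ∈ c0Set, (preissNorm x = 0 ↔ x = 0)) ∧
    (∀ x ∈ c0Set, (1 / 2) * preissNorm x ≤ ‖x‖ ∧ ‖x‖ ≤ preissNorm x) := by
  refine ⟨?_, ?_, ?_, ?_⟩
  · -- triangle inequality
    intro x hx y hy
    apply le_of_forall_pos_le_add
    intro ε hε
    obtain ⟨s, hsS, hs⟩ := Real.lt_sInf_add_pos (preiss_nonempty x) (half_pos hε)
    obtain ⟨t, htS, ht⟩ := Real.lt_sInf_add_pos (preiss_nonempty y) (half_pos hε)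
    obtain ⟨hs0, hsC⟩ := hsS
    obtain ⟨ht0, htC⟩ := htS
    have hst : 0 < s + t := by linarith
    have hmem : s + t ∈ {r : ℝ | 0 < r ∧ Cfun (r⁻¹ • (x + y)) ≤ 1} := by
      refine ⟨hst, ?_⟩
      set u : Linf := s⁻¹ • x with hu
      set v : Linf := t⁻¹ • y with hv
      have hum : u ∈ c0Set := smul_mem_c0 hx _
      have hvm : v ∈ c0Set := smul_mem_c0 hy _
      set l : ℝ := s / (s + t) with hl
      set m : ℝ := t / (s + t) with hm
      have hl0 : 0 ≤ l := by positivity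
      have hm0 : 0 ≤ m := by positivity
      have hlm : l + m = 1 := by
        rw [hl, hm, ← add_div, div_self (ne_of_gt hst)]
      have hconv : ∀ n : ℕ,
          (((s + t)⁻¹ • (x + y)) n) ^ (2 * (n + 1)) ≤
            l * (u n) ^ (2 * (n + 1)) + m * (v n) ^ (2 * (n + 1)) := by
        intro n
        have heq : (((s + t)⁻¹ • (x + y)) n) = l * u n + m * v n := by
          have h1 : (((s + t)⁻¹ • (x + y)) n) = (s + t)⁻¹ * (x n + y n) := by
            rw [lp.coeFn_smul, Pi.smul_apply, smul_eq_mul, lp.coeFn_add, Pi.add_apply]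
          have h2 : u n = s⁻¹ * x n := by
            rw [hu, lp.coeFn_smul, Pi.smul_apply, smul_eq_mul]
          have h3 : v n = t⁻¹ * y n := by
            rw [hv, lp.coeFn_smul, Pi.smul_apply, smul_eq_mul]
          rw [h1, h2, h3, hl, hm]
          field_simp
        rw [heq]
        have := (Even.convexOn_pow (even_two_mul (n + 1)) (𝕜 := ℝ)).2
          (Set.mem_univ (u n)) (Set.mem_univ (v n)) hl0 hm0 hlm
        exact this
      have hsumL : Summable (fun n : ℕ => (((s + t)⁻¹ • (x + y)) n) ^ (2 * (n + 1))) :=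
        summable_c0 (smul_mem_c0 (add_mem_c0 hx hy) _)
      have hsumR : Summable (fun n : ℕ =>
          l * (u n) ^ (2 * (n + 1)) + m * (v n) ^ (2 * (n + 1))) :=
        ((summable_c0 hum).mul_left l).add ((summable_c0 hvm).mul_left m)
      have hle : Cfun ((s + t)⁻¹ • (x + y)) ≤
          ∑' n : ℕ, (l * (u n) ^ (2 * (n + 1)) + m * (v n) ^ (2 * (n + 1))) :=
        Summable.tsum_le_tsum hconv hsumL hsumR
      have heval : ∑' n : ℕ, (l * (u n) ^ (2 * (n + 1)) + m * (v n) ^ (2 * (n + 1)))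
          = l * Cfun u + m * Cfun v := by
        rw [Summable.tsum_add ((summable_c0 hum).mul_left l) ((summable_c0 hvm).mul_left m),
          tsum_mul_left, tsum_mul_left]
        rfl
      rw [heval] at hle
      calc Cfun ((s + t)⁻¹ • (x + y)) ≤ l * Cfun u + m * Cfun v := hle
        _ ≤ l * 1 + m * 1 := by
            apply add_le_add
            · exact mul_le_mul_of_nonneg_left hsC hl0
            · exact mul_le_mul_of_nonneg_left htC hm0
        _ = 1 := by rw [mul_one, mul_one, hlm]
    have h1 : preissNorm (x + y) ≤ s + t := csInf_le (preiss_bddBelow (x + y)) hmem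
    have h2 : preissNorm x = sInf {t : ℝ | 0 < t ∧ Cfun (t⁻¹ • x) ≤ 1} := rfl
    have h3 : preissNorm y = sInf {t : ℝ | 0 < t ∧ Cfun (t⁻¹ • y) ≤ 1} := rfl
    rw [← h2] at hs
    rw [← h3] at ht
    linarith
  · -- homogeneity
    intro x _ a
    rcases eq_or_ne a 0 with rfl | ha
    · simp [preiss_zero]
    · have ha' : (0:ℝ) < |a| := abs_pos.mpr ha
      have hset : {t : ℝ | 0 < t ∧ Cfun (t⁻¹ • (a • x)) ≤ 1}
          = |a| • {t : ℝ | 0 < t ∧ Cfun (t⁻¹ • x) ≤ 1} := by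
        ext t
        rw [Set.mem_smul_set_iff_inv_smul_mem₀ (ne_of_gt ha')]
        simp only [Set.mem_setOf_eq, smul_eq_mul]
        constructor
        · rintro ⟨ht0, htC⟩
          refine ⟨by positivity, ?_⟩
          have key : (|a|⁻¹ * t)⁻¹ • x = |t⁻¹ * a| • x := by
            congr 1
            rw [abs_mul, abs_inv, abs_of_pos ht0, mul_inv, inv_inv, mul_comm]
          rw [key, ← cfun_abs_smul]
          have : t⁻¹ • (a • x) = (t⁻¹ * a) • x := by rw [smul_smul]
          rw [this] at htC
          exact htC
        · rintro ⟨ht0, htC⟩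
          have ht0' : 0 < t := by
            by_contra h
            push_neg at h
            have : |a|⁻¹ * t ≤ 0 := mul_nonpos_of_nonneg_of_nonpos (by positivity) h
            linarith
          refine ⟨ht0', ?_⟩
          have key : t⁻¹ • (a • x) = (t⁻¹ * a) • x := by rw [smul_smul]
          rw [key, cfun_abs_smul]
          have : |t⁻¹ * a| • x = (|a|⁻¹ * t)⁻¹ • x := by
            congr 1
            rw [abs_mul, abs_inv, abs_of_pos ht0', mul_inv, inv_inv, mul_comm]
          rw [this]
          exact htC
      unfold preissNorm
      rw [hset, Real.sInf_smul_of_nonneg (le_of_lt ha'), smul_eq_mul]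
  · -- definiteness
    intro x hx
    constructor
    · intro h
      have h1 : ‖x‖ ≤ preissNorm x := norm_le_preiss hx
      rw [h] at h1
      exact norm_le_zero_iff.mp h1
    · rintro rfl
      exact preiss_zero
  · -- equivalence
    intro x hx
    have h1 : ‖x‖ ≤ preissNorm x := norm_le_preiss hx
    have h2 : preissNorm x ≤ 2 * ‖x‖ := preiss_le_two_norm x
    constructor
    · linarith
    · exact h1
end
end

section
/- The set U = {x ∈ ℓ_∞ : there exist j₀ ∈ ℕ and a ∈ (0, 3/4) such that |x_j| < a for all j > j₀} is a convex open subset of ℓ_∞ containing c₀, and the function C(x) = Σ_{n=1}^∞ x_n^{2n} is well defined (the series converges) and real analytic on U. -/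
open scoped ENNReal

noncomputable section

/-- The set `U ⊆ ℓ_∞` of sequences eventually bounded by some `a < 3/4`. -/
def U : Set Linf :=
  {x | ∃ (j₀ : ℕ) (a : ℝ), 0 < a ∧ a < 3 / 4 ∧ ∀ j > j₀, |x j| < a}

namespace CAux

/-- coordinate evaluation as a continuous linear map -/
def ev (n : ℕ) : Linf →L[ℝ] ℝ :=
  LinearMap.mkContinuous
    { toFun := fun x => x n
      map_add' := fun x y => by simp [lp.coeFn_add]
      map_smul' := fun c x => by simp [lp.coeFn_smul] }
    1 (fun x => by
      rw [one_mul]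
      exact lp.norm_apply_le_norm (by simp : (⊤ : ℝ≥0∞) ≠ 0) x n)

@[simp] lemma ev_apply (n : ℕ) (x : Linf) : ev n x = x n := rfl

/-- the continuous multilinear map `(m₁, …, m_k) ↦ ∏ i, m_i n` -/
def mk (k n : ℕ) : ContinuousMultilinearMap ℝ (fun _ : Fin k => Linf) ℝ :=
  (ContinuousMultilinearMap.mkPiAlgebra ℝ (Fin k) ℝ).compContinuousLinearMap fun _ => ev n

lemma mk_apply (k n : ℕ) (m : Fin k → Linf) : mk k n m = ∏ i, (m i) n := rfl

lemma mk_apply_const (k n : ℕ) (y : Linf) : mk k n (fun _ => y) = (y n) ^ k := by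
  simp [mk_apply]

lemma norm_mk_le (k n : ℕ) : ‖mk k n‖ ≤ 1 := by
  refine ContinuousMultilinearMap.opNorm_le_bound zero_le_one fun m => ?_
  rw [mk_apply, one_mul, Real.norm_eq_abs, Finset.abs_prod]
  refine Finset.prod_le_prod (fun i _ => abs_nonneg _) fun i _ => ?_
  rw [← Real.norm_eq_abs]
  exact lp.norm_apply_le_norm (by simp : (⊤ : ℝ≥0∞) ≠ 0) (m i) n

lemma binom_tsum (u v : ℝ) (m : ℕ) :
    ∑' k : ℕ, ((Nat.choose m k : ℝ) * u ^ (m - k) * v ^ k) = (u + v) ^ m := by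
  rw [tsum_eq_sum (s := Finset.range (m + 1)) ?_]
  · rw [show u + v = v + u from add_comm u v, add_pow]
    exact Finset.sum_congr rfl fun k _ => by ring
  · intro k hk
    have : m < k := by simpa using hk
    simp [Nat.choose_eq_zero_of_lt this]

lemma binom_slice_summable (u v : ℝ) (m : ℕ) :
    Summable (fun k : ℕ => (Nat.choose m k : ℝ) * u ^ (m - k) * v ^ k) := by
  refine summable_of_ne_finset_zero (s := Finset.range (m + 1)) fun k hk => ?_
  have : m < k := by simpa using hk
  simp [Nat.choose_eq_zero_of_lt this]

lemma geom_summable {q : ℝ} (h0 : 0 ≤ q) (h1 : q < 1) :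
    Summable fun n : ℕ => q ^ (2 * (n + 1)) := by
  have : ∀ n : ℕ, q ^ (2 * (n + 1)) = q ^ 2 * (q ^ 2) ^ n := fun n => by ring
  simp only [this]
  exact (summable_geometric_of_lt_one (by positivity) (by nlinarith)).mul_left _

lemma tail_summable {x : Linf} {j₀ : ℕ} {a r : ℝ} (ha : 0 < a) (hr : 0 ≤ r)
    (h1 : a + r < 1) (hx : ∀ j > j₀, |x j| < a) :
    Summable fun n : ℕ => (|x n| + r) ^ (2 * (n + 1)) := by
  rw [← summable_nat_add_iff (j₀ + 1)]
  refine Summable.of_nonneg_of_le (fun n => by positivity) (fun n => ?_)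
    (geom_summable (q := a + r) (by positivity) h1)
  have hb : |x (n + (j₀ + 1))| + r ≤ a + r := by
    have := hx (n + (j₀ + 1)) (by omega)
    linarith
  calc (|x (n + (j₀ + 1))| + r) ^ (2 * (n + (j₀ + 1) + 1))
      ≤ (a + r) ^ (2 * (n + (j₀ + 1) + 1)) :=
        pow_le_pow_left₀ (by positivity) hb _
    _ ≤ (a + r) ^ (2 * (n + 1)) :=
        pow_le_pow_of_le_one (by positivity) h1.le (by omega)

/-- master summability on the product -/
lemma master {x : Linf} {j₀ : ℕ} {a r : ℝ} (ha : 0 < a) (hr : 0 ≤ r)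
    (h1 : a + r < 1) (hx : ∀ j > j₀, |x j| < a) :
    Summable fun p : ℕ × ℕ =>
      (Nat.choose (2 * (p.1 + 1)) p.2 : ℝ) * |x p.1| ^ (2 * (p.1 + 1) - p.2) * r ^ p.2 := by
  have hnn : (0 : ℕ × ℕ → ℝ) ≤ fun p : ℕ × ℕ =>
      (Nat.choose (2 * (p.1 + 1)) p.2 : ℝ) * |x p.1| ^ (2 * (p.1 + 1) - p.2) * r ^ p.2 :=
    fun p => mul_nonneg (mul_nonneg (Nat.cast_nonneg _)
      (pow_nonneg (abs_nonneg _) _)) (pow_nonneg hr _)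
  refine (summable_prod_of_nonneg hnn).mpr ⟨fun n => ?_, ?_⟩
  · simpa only using binom_slice_summable |x n| r (2 * (n + 1))
  have key : ∀ n : ℕ, ∑' k : ℕ, ((Nat.choose (2 * (n + 1)) k : ℝ)
      * |x n| ^ (2 * (n + 1) - k) * r ^ k) = (|x n| + r) ^ (2 * (n + 1)) :=
    fun n => binom_tsum _ _ _
  simpa only [key] using tail_summable ha hr h1 hx

set_option maxHeartbeats 2000000 in
set_option synthInstance.maxHeartbeats 400000 in
lemma analyticAt_C {x : Linf} (hx : x ∈ U) :
    AnalyticAt ℝ (fun z : Linf => ∑' n : ℕ, (z n) ^ (2 * (n + 1))) x := by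
  obtain ⟨j₀, a, ha, ha34, hxa⟩ := hx
  set r : ℝ := (1 - a) / 2 with hrdef
  have hr0 : 0 < r := by rw [hrdef]; linarith
  have hq : a + r < 1 := by rw [hrdef]; linarith
  -- scalar bounds
  set c : ℕ → ℕ → ℝ := fun n k =>
    (Nat.choose (2 * (n + 1)) k : ℝ) * |x n| ^ (2 * (n + 1) - k) with hcdef
  have hM : Summable fun p : ℕ × ℕ => c p.1 p.2 * r ^ p.2 := master ha hr0.le hq hxa
  have hck : ∀ k : ℕ, Summable fun n => c n k * r ^ k := by
    intro k
    have hinj : Function.Injective (fun n : ℕ => (n, k)) := fun a b h => by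
      simpa using congrArg Prod.fst h
    simpa only [Function.comp_def] using hM.comp_injective hinj
  have hc : ∀ k : ℕ, Summable fun n => c n k := by
    intro k
    refine ((hck k).mul_right ((r ^ k)⁻¹)).congr fun n => ?_
    field_simp
  -- the formal power series
  set s : ℕ → ℕ → ℝ := fun n k =>
    (Nat.choose (2 * (n + 1)) k : ℝ) * (x n) ^ (2 * (n + 1) - k) with hsdef
  have habs_s : ∀ n k, |s n k| = c n k := fun n k => by
    rw [hsdef, hcdef, abs_mul, abs_pow, Nat.abs_cast]
  have hterm_norm : ∀ n k, ‖(s n k) • mk k n‖ ≤ c n k := by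
    intro n k
    have h1 := norm_smul (s n k) (mk k n)
    rw [h1, Real.norm_eq_abs, habs_s]
    calc c n k * ‖mk k n‖ ≤ c n k * 1 := by
          refine mul_le_mul_of_nonneg_left (norm_mk_le k n) ?_
          rw [hcdef]; positivity
      _ = c n k := mul_one _
  have hterm : ∀ k : ℕ, Summable fun n => (s n k) • mk k n := fun k =>
    Summable.of_norm_bounded (hc k) fun n => hterm_norm n k
  set p : FormalMultilinearSeries ℝ Linf ℝ := fun k => ∑' n, (s n k) • mk k n with hpdef
  -- radius bound
  have hterm_norm_sum : ∀ k : ℕ, Summable fun n => ‖(s n k) • mk k n‖ := fun k =>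
    Summable.of_nonneg_of_le (fun n => norm_nonneg _) (fun n => hterm_norm n k) (hc k)
  have hpnorm : ∀ k : ℕ, ‖p k‖ ≤ ∑' n, c n k := fun k =>
    (norm_tsum_le_tsum_norm (hterm_norm_sum k)).trans
      (Summable.tsum_le_tsum (fun n => hterm_norm n k) (hterm_norm_sum k) (hc k))
  have hsum2 : Summable fun k => ∑' n, c n k * r ^ k := by
    have hswap : Summable fun q : ℕ × ℕ => c q.2 q.1 * r ^ q.1 := by
      simpa only [Prod.fst_swap, Prod.snd_swap] using hM.prod_symm
    have hnn : (0 : ℕ × ℕ → ℝ) ≤ fun q : ℕ × ℕ => c q.2 q.1 * r ^ q.1 := fun q =>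
      mul_nonneg (mul_nonneg (Nat.cast_nonneg _) (pow_nonneg (abs_nonneg _) _))
        (pow_nonneg hr0.le _)
    simpa only using ((summable_prod_of_nonneg hnn).mp hswap).2
  have hradsum : Summable fun k => ‖p k‖ * r ^ k := by
    refine Summable.of_nonneg_of_le
      (fun k => mul_nonneg (norm_nonneg _) (pow_nonneg hr0.le _)) (fun k => ?_) hsum2
    calc ‖p k‖ * r ^ k ≤ (∑' n, c n k) * r ^ k :=
          mul_le_mul_of_nonneg_right (hpnorm k) (pow_nonneg hr0.le _)
      _ = ∑' n, c n k * r ^ k := (tsum_mul_right).symm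
  set rn : NNReal := ⟨r, hr0.le⟩ with hrn
  have hrad : (rn : ℝ≥0∞) ≤ p.radius := p.le_radius_of_summable_norm hradsum
  -- the HasSum part
  refine ⟨p, (rn : ℝ≥0∞), hrad, by exact_mod_cast hr0, ?_⟩
  intro y hy
  have hyr : ‖y‖ < r := by
    have := mem_emetric_ball_zero_iff.mp hy
    exact_mod_cast this
  have hyn : ∀ n : ℕ, |y n| ≤ ‖y‖ := fun n => by
    rw [← Real.norm_eq_abs]
    exact lp.norm_apply_le_norm (by simp : (⊤ : ℝ≥0∞) ≠ 0) y n
  set h : ℕ → ℕ → ℝ := fun n k => s n k * (y n) ^ k with hhdef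
  have hMy : Summable fun q : ℕ × ℕ => c q.1 q.2 * ‖y‖ ^ q.2 :=
    master ha (norm_nonneg y) (by linarith) hxa
  have hAbs : Summable fun q : ℕ × ℕ => |h q.1 q.2| := by
    refine Summable.of_nonneg_of_le (fun q => abs_nonneg _) (fun q => ?_) hMy
    rw [hhdef]
    simp only
    rw [abs_mul, abs_pow, habs_s]
    refine mul_le_mul_of_nonneg_left (pow_le_pow_left₀ (abs_nonneg _) (hyn q.1) _) ?_
    rw [hcdef]; positivity
  have hH : Summable fun q : ℕ × ℕ => h q.1 q.2 := (summable_abs_iff).mp hAbs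
  -- evaluate the power series coefficients at y
  have step1 : ∀ k : ℕ, (p k fun _ => y) = ∑' n, h n k := by
    intro k
    have := (ContinuousMultilinearMap.apply ℝ (fun _ : Fin k => Linf) ℝ
      (fun _ => y)).map_tsum (hterm k)
    rw [hpdef]
    simp only [ContinuousMultilinearMap.apply_apply] at this
    rw [this]
    refine tsum_congr fun n => ?_
    rw [ContinuousMultilinearMap.smul_apply, mk_apply_const, smul_eq_mul]
  have hslice : ∀ k : ℕ, Summable fun n => |h n k| := by
    intro k
    have hinj : Function.Injective (fun n : ℕ => (n, k)) := fun a b hab => by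
      simpa using congrArg Prod.fst hab
    simpa only [Function.comp_def] using hAbs.comp_injective hinj
  have htails : Summable fun k => ∑' n, |h n k| := by
    have hswap : Summable fun q : ℕ × ℕ => |h q.2 q.1| := by
      simpa only [Prod.fst_swap, Prod.snd_swap] using hAbs.prod_symm
    have hnn : (0 : ℕ × ℕ → ℝ) ≤ fun q : ℕ × ℕ => |h q.2 q.1| := fun q => abs_nonneg _
    simpa only using ((summable_prod_of_nonneg hnn).mp hswap).2
  have hks : Summable fun k => ∑' n, h n k := by
    refine Summable.of_norm_bounded htails fun k => ?_
    have := norm_tsum_le_tsum_norm (f := fun n => h n k)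
      (by simpa only [Real.norm_eq_abs] using hslice k)
    simpa only [Real.norm_eq_abs] using this
  have hcomm : ∑' k, ∑' n, h n k = ∑' n, ∑' k, h n k := by
    refine Summable.tsum_comm (f := h) ?_
    exact hH
  have hrow : ∀ n : ℕ, ∑' k, h n k = ((x + y) n) ^ (2 * (n + 1)) := by
    intro n
    have hb := binom_tsum (x n) (y n) (2 * (n + 1))
    have hadd : (x + y) n = x n + y n := by
      rw [lp.coeFn_add]; rfl
    rw [hadd, ← hb]
  have hval : (∑' n : ℕ, ((x + y) n) ^ (2 * (n + 1))) = ∑' k, ∑' n, h n k := by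
    rw [hcomm]
    exact tsum_congr fun n => (hrow n).symm
  have hfun : (fun k => p k fun _ => y) = fun k => ∑' n, h n k := funext step1
  rw [hfun]
  show HasSum (fun k => ∑' n, h n k) (∑' n : ℕ, ((x + y) n) ^ (2 * (n + 1)))
  rw [hval]
  exact hks.hasSum

end CAux

/-- `U` is a convex open subset of `ℓ_∞` containing `c₀`, and
`C(x) = ∑_{n≥1} x_n^{2n}` is well defined and real analytic on `U`. -/
theorem U_convex_open_and_C_analytic :
    Convex ℝ U ∧ IsOpen U ∧ c0Set ⊆ U ∧
    (∀ x ∈ U, Summable (fun n : ℕ => (x n) ^ (2 * (n + 1)))) ∧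
    AnalyticOnNhd ℝ (fun x : Linf => ∑' n : ℕ, (x n) ^ (2 * (n + 1))) U := by
  refine ⟨?_, ?_, ?_, ?_, ?_⟩
  · -- Convex
    rintro x ⟨j₁, a, ha, ha34, hxa⟩ y ⟨j₂, b, hb, hb34, hyb⟩ sc tc hsc htc hst
    refine ⟨max j₁ j₂, (max a b + 3 / 4) / 2, by positivity, ?_, ?_⟩
    · have : max a b < 3 / 4 := max_lt ha34 hb34
      linarith
    · intro j hj
      have hz : (sc • x + tc • y) j = sc * x j + tc * y j := by
        rw [lp.coeFn_add, Pi.add_apply, lp.coeFn_smul, lp.coeFn_smul]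
        rfl
      have h1 : |x j| < a := hxa j (lt_of_le_of_lt (le_max_left _ _) hj)
      have h2 : |y j| < b := hyb j (lt_of_le_of_lt (le_max_right _ _) hj)
      have hmax : max a b < 3 / 4 := max_lt ha34 hb34
      have hxm : |x j| ≤ max a b := h1.le.trans (le_max_left _ _)
      have hym : |y j| ≤ max a b := h2.le.trans (le_max_right _ _)
      rw [hz]
      calc |sc * x j + tc * y j| ≤ |sc * x j| + |tc * y j| := abs_add_le _ _
        _ = sc * |x j| + tc * |y j| := by
            rw [abs_mul, abs_mul, abs_of_nonneg hsc, abs_of_nonneg htc]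
        _ ≤ sc * max a b + tc * max a b := by
            exact add_le_add (mul_le_mul_of_nonneg_left hxm hsc)
              (mul_le_mul_of_nonneg_left hym htc)
        _ = max a b := by rw [← add_mul, hst, one_mul]
        _ < (max a b + 3 / 4) / 2 := by linarith
  · -- IsOpen
    rw [Metric.isOpen_iff]
    rintro x ⟨j₀, a, ha, ha34, hxa⟩
    refine ⟨(3 / 4 - a) / 2, by linarith, ?_⟩
    intro y hy
    rw [Metric.mem_ball, dist_eq_norm] at hy
    refine ⟨j₀, a + (3 / 4 - a) / 2, by linarith, by linarith, ?_⟩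
    intro j hj
    have h1 : |y j - x j| ≤ ‖y - x‖ := by
      rw [← Real.norm_eq_abs]
      have : (y - x) j = y j - x j := by rw [lp.coeFn_sub]; rfl
      rw [← this]
      exact lp.norm_apply_le_norm (by simp : (⊤ : ℝ≥0∞) ≠ 0) (y - x) j
    have h2 : |x j| < a := hxa j hj
    calc |y j| ≤ |x j| + |y j - x j| := by
          have := abs_add_le (x j) (y j - x j)
          simpa [add_sub_cancel] using this
      _ < a + (3 / 4 - a) / 2 := by
          have := h1.trans_lt hy
          linarith
  · -- c0Set ⊆ U
    intro x hx
    have := Metric.tendsto_atTop.mp hx (1 / 2) (by norm_num)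
    obtain ⟨N, hN⟩ := this
    refine ⟨N, 1 / 2, by norm_num, by norm_num, ?_⟩
    intro j hj
    have := hN j hj.le
    rwa [Real.dist_eq, sub_zero] at this
  · -- Summable
    rintro x ⟨j₀, a, ha, ha34, hxa⟩
    have h0 : Summable fun n : ℕ => (|x n| + 0) ^ (2 * (n + 1)) :=
      CAux.tail_summable ha le_rfl (by linarith) hxa
    simp only [add_zero] at h0
    refine Summable.of_norm_bounded h0 fun n => ?_
    rw [Real.norm_eq_abs, abs_pow]
  · -- Analytic
    intro x hx
    exact CAux.analyticAt_C hx
end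
end

section
/- Let (t_j)_{j≥1} be a sequence of reals with 0 ≤ t_j ≤ 1 for all j, such that there exist j₀ ∈ ℕ and a ∈ (0, 3/4) with t_j < a for all j > j₀, and suppose t_{j₁} ≥ 4/5 for some index j₁. Then there is exactly one μ > 0 for which the series Σ_{j=1}^∞ (t_j/μ)^{2j} converges and equals 1, and this μ satisfies 4/5 ≤ μ ≤ √2. -/
set_option maxHeartbeats 800000

private lemma aux_summable (t : ℕ → ℝ) (ht0 : ∀ j, 0 ≤ t j) (j₀ : ℕ)
    (hsm : ∀ j > j₀, t j ≤ 3 / 4) {μ : ℝ} (hμ : 4 / 5 ≤ μ) :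
    Summable (fun j : ℕ => (t j / μ) ^ (2 * (j + 1))) := by
  have hμ0 : (0:ℝ) < μ := by linarith
  have key : ∀ n : ℕ,
      (t (n + (j₀ + 1)) / μ) ^ (2 * (n + (j₀ + 1) + 1)) ≤ ((15 / 16 : ℝ) ^ 2) ^ n := by
    intro n
    have h1 : t (n + (j₀ + 1)) / μ ≤ 15 / 16 := by
      have h2 := hsm (n + (j₀ + 1)) (by omega)
      rw [div_le_iff₀ hμ0]
      nlinarith
    calc (t (n + (j₀ + 1)) / μ) ^ (2 * (n + (j₀ + 1) + 1))
        ≤ (15 / 16 : ℝ) ^ (2 * (n + (j₀ + 1) + 1)) :=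
          pow_le_pow_left₀ (div_nonneg (ht0 _) hμ0.le) h1 _
      _ ≤ (15 / 16 : ℝ) ^ (2 * n) :=
          pow_le_pow_of_le_one (by norm_num) (by norm_num) (by omega)
      _ = ((15 / 16 : ℝ) ^ 2) ^ n := by rw [← pow_mul]
  rw [← summable_nat_add_iff (j₀ + 1)]
  exact Summable.of_nonneg_of_le
    (fun n => pow_nonneg (div_nonneg (ht0 _) hμ0.le) _) key
    (summable_geometric_of_lt_one (by positivity) (by norm_num))

private lemma aux_strict_anti (t : ℕ → ℝ) (ht0 : ∀ j, 0 ≤ t j) (j₀ : ℕ)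
    (hsm : ∀ j > j₀, t j ≤ 3 / 4) (j₁ : ℕ) (hb : 4 / 5 ≤ t j₁)
    {μ₁ μ₂ : ℝ} (h1 : 4 / 5 ≤ μ₁) (h12 : μ₁ < μ₂) :
    (∑' j : ℕ, (t j / μ₂) ^ (2 * (j + 1))) < (∑' j : ℕ, (t j / μ₁) ^ (2 * (j + 1))) := by
  have hμ1 : (0:ℝ) < μ₁ := by linarith
  have hμ2 : (0:ℝ) < μ₂ := by linarith
  refine Summable.tsum_lt_tsum (i := j₁) ?_ ?_ ?_ ?_
  · intro j
    exact pow_le_pow_left₀ (div_nonneg (ht0 _) hμ2.le)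
      (div_le_div_of_nonneg_left (ht0 j) hμ1 h12.le) _
  · have hbase : t j₁ / μ₂ < t j₁ / μ₁ :=
      div_lt_div_of_pos_left (by linarith) hμ1 h12
    exact pow_lt_pow_left₀ hbase (div_nonneg (ht0 _) hμ2.le) (by omega)
  · exact aux_summable t ht0 j₀ hsm (by linarith)
  · exact aux_summable t ht0 j₀ hsm h1

/-- For a `[0,1]`-valued sequence `(t_j)_{j≥1}` which is eventually below some `a < 3/4` and
has some entry `≥ 4/5`, there is exactly one `μ > 0` with `∑_{j≥1} (t_j/μ)^{2j} = 1`
(the series converging), and it satisfies `4/5 ≤ μ ≤ √2`.  (The sequence is indexed here by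
`j : ℕ` via `j ↦ j+1`.) -/
theorem unique_preiss_value
    (t : ℕ → ℝ) (ht : ∀ j, t j ∈ Set.Icc (0 : ℝ) 1)
    (hsmall : ∃ (j₀ : ℕ) (a : ℝ), 0 < a ∧ a < 3 / 4 ∧ ∀ j > j₀, t j < a)
    (hbig : ∃ j₁, 4 / 5 ≤ t j₁) :
    ∃ μ : ℝ,
      (0 < μ ∧ Summable (fun j : ℕ => (t j / μ) ^ (2 * (j + 1))) ∧
        (∑' j : ℕ, (t j / μ) ^ (2 * (j + 1))) = 1 ∧
        4 / 5 ≤ μ ∧ μ ≤ Real.sqrt 2) ∧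
      ∀ μ' : ℝ, 0 < μ' → Summable (fun j : ℕ => (t j / μ') ^ (2 * (j + 1))) →
        (∑' j : ℕ, (t j / μ') ^ (2 * (j + 1))) = 1 → μ' = μ := by
  obtain ⟨j₀, a, ha0, ha34, hsma⟩ := hsmall
  obtain ⟨j₁, hb⟩ := hbig
  have ht0 : ∀ j, 0 ≤ t j := fun j => (ht j).1
  have ht1 : ∀ j, t j ≤ 1 := fun j => (ht j).2
  have hsm : ∀ j > j₀, t j ≤ 3 / 4 := fun j hj => ((hsma j hj).trans ha34).le
  -- the sqrt 2 facts
  have hs2 : Real.sqrt 2 ^ 2 = 2 := Real.sq_sqrt (by norm_num)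
  have hs0 : (0:ℝ) ≤ Real.sqrt 2 := Real.sqrt_nonneg 2
  have hs45 : (4/5 : ℝ) ≤ Real.sqrt 2 := by nlinarith
  -- the modified function
  set g : ℝ → ℕ → ℝ := fun μ j => (t j / max μ (4/5)) ^ (2 * (j + 1)) with hgdef
  have hmaxpos : ∀ μ : ℝ, (0:ℝ) < max μ (4/5) := fun μ => lt_max_of_lt_right (by norm_num)
  have hmax45 : ∀ μ : ℝ, (4/5 : ℝ) ≤ max μ (4/5) := fun μ => le_max_right _ _
  -- continuity of G
  have hGcont : Continuous (fun μ : ℝ => ∑' j : ℕ, g μ j) := by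
    apply continuous_tsum (u := fun j : ℕ => (4/3 : ℝ) ^ (2 * (j₀ + 1)) * ((15/16 : ℝ) ^ 2) ^ (j + 1))
    · intro j
      exact (continuous_const.div (continuous_id.max continuous_const)
        (fun x => (hmaxpos x).ne')).pow _
    · apply Summable.mul_left
      have : Summable (fun n : ℕ => ((15/16 : ℝ) ^ 2) * ((15/16 : ℝ) ^ 2) ^ n) :=
        (summable_geometric_of_lt_one (by positivity) (by norm_num)).mul_left _
      exact this.congr (fun n => by ring)
    · intro j μ
      have hnn : 0 ≤ g μ j := pow_nonneg (div_nonneg (ht0 _) (hmaxpos μ).le) _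
      rw [Real.norm_eq_abs, abs_of_nonneg hnn]
      rcases le_or_gt j j₀ with hj | hj
      · have h1 : t j / max μ (4/5) ≤ 5/4 := by
          rw [div_le_iff₀ (hmaxpos μ)]
          nlinarith [ht1 j, hmax45 μ]
        have h2 : g μ j ≤ (5/4 : ℝ) ^ (2 * (j + 1)) :=
          pow_le_pow_left₀ (div_nonneg (ht0 _) (hmaxpos μ).le) h1 _
        have h3 : (5/4 : ℝ) ^ (2 * (j + 1))
            = (4/3 : ℝ) ^ (2 * (j + 1)) * ((15/16 : ℝ) ^ 2) ^ (j + 1) := by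
          rw [← pow_mul, ← mul_pow]
          norm_num
        have h4 : (4/3 : ℝ) ^ (2 * (j + 1)) ≤ (4/3 : ℝ) ^ (2 * (j₀ + 1)) :=
          pow_le_pow_right₀ (by norm_num) (by omega)
        have h5 : (0:ℝ) ≤ ((15/16 : ℝ) ^ 2) ^ (j + 1) := by positivity
        calc g μ j ≤ (4/3 : ℝ) ^ (2 * (j + 1)) * ((15/16 : ℝ) ^ 2) ^ (j + 1) := by
              rw [← h3]; exact h2
          _ ≤ (4/3 : ℝ) ^ (2 * (j₀ + 1)) * ((15/16 : ℝ) ^ 2) ^ (j + 1) :=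
              mul_le_mul_of_nonneg_right h4 h5
      · have h1 : t j / max μ (4/5) ≤ 15/16 := by
          rw [div_le_iff₀ (hmaxpos μ)]
          nlinarith [hsm j hj, hmax45 μ]
        have h2 : g μ j ≤ (15/16 : ℝ) ^ (2 * (j + 1)) :=
          pow_le_pow_left₀ (div_nonneg (ht0 _) (hmaxpos μ).le) h1 _
        have h3 : (15/16 : ℝ) ^ (2 * (j + 1)) = ((15/16 : ℝ) ^ 2) ^ (j + 1) := by
          rw [← pow_mul]
        have h4 : (1:ℝ) ≤ (4/3 : ℝ) ^ (2 * (j₀ + 1)) := one_le_pow₀ (by norm_num)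
        nlinarith [pow_nonneg (show (0:ℝ) ≤ (15/16:ℝ)^2 by positivity) (j+1)]
  -- G agrees with F on [4/5, ∞)
  have hGF : ∀ μ : ℝ, 4/5 ≤ μ →
      (∑' j : ℕ, g μ j) = ∑' j : ℕ, (t j / μ) ^ (2 * (j + 1)) := by
    intro μ hμ
    congr 1
    funext j
    rw [hgdef]
    simp only [max_eq_left hμ]
  -- value at 4/5 : ≥ 1
  have hG45 : (1:ℝ) ≤ ∑' j : ℕ, g (4/5) j := by
    have hsum : Summable (g (4/5)) := by
      have := aux_summable t ht0 j₀ hsm (le_refl (4/5 : ℝ))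
      apply this.congr
      intro j
      rw [hgdef]; simp
    have hterm : (1:ℝ) ≤ g (4/5) j₁ := by
      apply one_le_pow₀
      rw [le_div_iff₀ (hmaxpos _)]
      have : max (4/5 : ℝ) (4/5) = 4/5 := max_self _
      rw [this]; linarith
    calc (1:ℝ) ≤ g (4/5) j₁ := hterm
      _ ≤ ∑' j : ℕ, g (4/5) j :=
        Summable.le_tsum hsum j₁ (fun i _ => pow_nonneg (div_nonneg (ht0 _) (hmaxpos _).le) _)
  -- value at sqrt 2 : ≤ 1
  have hGs2 : (∑' j : ℕ, g (Real.sqrt 2) j) ≤ 1 := by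
    have hs2pos : (0:ℝ) < Real.sqrt 2 := by linarith
    have hsummaj : Summable (fun j : ℕ => ((1:ℝ)/2) ^ (j + 1)) := by
      have : Summable (fun n : ℕ => ((1:ℝ)/2) * ((1:ℝ)/2) ^ n) :=
        (summable_geometric_of_lt_one (by norm_num) (by norm_num)).mul_left _
      exact this.congr (fun n => by ring)
    have hsumg : Summable (g (Real.sqrt 2)) := by
      have := aux_summable t ht0 j₀ hsm hs45
      apply this.congr
      intro j
      rw [hgdef]; simp [max_eq_left hs45]
    have hle : ∀ j : ℕ, g (Real.sqrt 2) j ≤ ((1:ℝ)/2) ^ (j + 1) := by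
      intro j
      have hmax : max (Real.sqrt 2) (4/5 : ℝ) = Real.sqrt 2 := max_eq_left hs45
      have h1 : t j / Real.sqrt 2 ≤ 1 / Real.sqrt 2 := by
        gcongr
        exact ht1 j
      have h2 : g (Real.sqrt 2) j ≤ ((1:ℝ) / Real.sqrt 2) ^ (2 * (j + 1)) := by
        rw [hgdef]
        simp only [hmax]
        exact pow_le_pow_left₀ (div_nonneg (ht0 _) hs2pos.le) h1 _
      have h3 : ((1:ℝ) / Real.sqrt 2) ^ (2 * (j + 1)) = ((1:ℝ)/2) ^ (j + 1) := by
        rw [pow_mul, div_pow, one_pow, hs2]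
      linarith [h2, h3.le]
    have hsum12 : (∑' j : ℕ, ((1:ℝ)/2) ^ (j + 1)) = 1 := by
      have : (fun j : ℕ => ((1:ℝ)/2) ^ (j + 1)) = fun j : ℕ => ((1:ℝ)/2) * ((1:ℝ)/2) ^ j := by
        funext j; ring
      rw [this, tsum_mul_left, tsum_geometric_of_lt_one (by norm_num) (by norm_num)]
      norm_num
    calc (∑' j : ℕ, g (Real.sqrt 2) j) ≤ ∑' j : ℕ, ((1:ℝ)/2) ^ (j + 1) :=
          Summable.tsum_le_tsum hle hsumg hsummaj
      _ = 1 := hsum12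
  -- IVT
  have hIVT := intermediate_value_Icc' hs45 hGcont.continuousOn
  have h1mem : (1:ℝ) ∈ Set.Icc ((fun μ : ℝ => ∑' j : ℕ, g μ j) (Real.sqrt 2))
      ((fun μ : ℝ => ∑' j : ℕ, g μ j) (4/5)) := ⟨hGs2, hG45⟩
  obtain ⟨μ, hμmem, hμeq⟩ := hIVT h1mem
  have hμ45 : (4/5 : ℝ) ≤ μ := hμmem.1
  have hμpos : (0:ℝ) < μ := by linarith
  have hFμ : (∑' j : ℕ, (t j / μ) ^ (2 * (j + 1))) = 1 := by
    rw [← hGF μ hμ45]; exact hμeq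
  refine ⟨μ, ⟨hμpos, aux_summable t ht0 j₀ hsm hμ45, hFμ, hμ45, hμmem.2⟩, ?_⟩
  intro μ' hμ'pos hμ'sum hμ'eq
  -- first : μ' ≥ 4/5
  have hμ'45 : (4/5 : ℝ) ≤ μ' := by
    by_contra hlt
    push_neg at hlt
    have hterm : (1:ℝ) < (t j₁ / μ') ^ (2 * (j₁ + 1)) := by
      apply one_lt_pow₀
      · rw [lt_div_iff₀ hμ'pos]; linarith
      · omega
    have hle : (t j₁ / μ') ^ (2 * (j₁ + 1)) ≤ ∑' j : ℕ, (t j / μ') ^ (2 * (j + 1)) :=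
      Summable.le_tsum hμ'sum j₁ (fun i _ => pow_nonneg (div_nonneg (ht0 _) hμ'pos.le) _)
    rw [hμ'eq] at hle
    linarith
  rcases lt_trichotomy μ' μ with h | h | h
  · have := aux_strict_anti t ht0 j₀ hsm j₁ hb hμ'45 h
    rw [hFμ, hμ'eq] at this
    exact absurd this (lt_irrefl 1)
  · exact h
  · have := aux_strict_anti t ht0 j₀ hsm j₁ hb hμ45 h
    rw [hFμ, hμ'eq] at this
    exact absurd this (lt_irrefl 1)
end
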